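/- arXiv:0704.0217 — 6 statements merged into one kernel-verified Lean document; each statement's English description precedes it below -/
import Mathlib

section
/- Fix B̄ > 0. For each integer N_t ≥ 2, let n = 2^{⌊B̄ N_t⌋} and let Y_1, …, Y_n be i.i.d. random variables with cumulative distribution function F(y) = 1 − (1 − y)^{N_t − 1} on [0, 1]. Then, as N_t → ∞, E[ max_{1 ≤ j ≤ n} Y_j ] → 1 − 2^{−B̄} and Var[ max_{1 ≤ j ≤ n} Y_j ] → 0; equivalently, max_{1 ≤ j ≤ n} Y_j converges in mean square (in L²) to the constant 1 − 2^{−B̄}. -/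
open MeasureTheory ProbabilityTheory Filter Real
open scoped ENNReal NNReal Topology

section StmtFiveAux

lemma aux_floor_pow_le {B : ℝ} (hB : 0 < B) (N : ℕ) :
    ((2 : ℕ) ^ ⌊B * N⌋₊ : ℝ) ≤ (2 : ℝ) ^ (B * N) := by
  have h1 : ((2:ℕ) ^ ⌊B * N⌋₊ : ℝ) = (2:ℝ) ^ ((⌊B * N⌋₊ : ℕ) : ℝ) := by
    push_cast
    rw [Real.rpow_natCast]
  rw [h1]
  apply Real.rpow_le_rpow_of_exponent_le one_le_two
  exact Nat.floor_le (by positivity)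

lemma aux_pow_le_floor_pow {B : ℝ} (hB : 0 < B) (N : ℕ) :
    (2 : ℝ) ^ (B * N - 1) ≤ ((2 : ℕ) ^ ⌊B * N⌋₊ : ℝ) := by
  have h1 : ((2:ℕ) ^ ⌊B * N⌋₊ : ℝ) = (2:ℝ) ^ ((⌊B * N⌋₊ : ℕ) : ℝ) := by
    push_cast
    rw [Real.rpow_natCast]
  rw [h1]
  apply Real.rpow_le_rpow_of_exponent_le one_le_two
  have := Nat.lt_floor_add_one (B * N)
  linarith

lemma aux_rpow_split {B q : ℝ} (hB : 0 < B) {N : ℕ} (hN : 1 ≤ N) :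
    (2 : ℝ) ^ (B * N) * q ^ (N - 1) = (2:ℝ) ^ (B:ℝ) * ((2:ℝ) ^ (B:ℝ) * q) ^ (N - 1) := by
  have hN' : (N : ℝ) = ((N - 1 : ℕ) : ℝ) + 1 := by
    have : N - 1 + 1 = N := Nat.succ_pred_eq_of_pos hN
    exact_mod_cast (by rw [this] : ((N - 1 + 1 : ℕ) : ℝ) = N).symm
  rw [mul_pow, ← Real.rpow_natCast ((2:ℝ) ^ (B:ℝ)) (N-1), ← Real.rpow_mul (by norm_num : (0:ℝ) ≤ 2),
    ← mul_assoc, ← Real.rpow_add (by norm_num : (0:ℝ) < 2), hN']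
  ring_nf

lemma aux_geo {B q : ℝ} (hB : 0 < B) (hq : 0 ≤ q) (hlt : (2:ℝ) ^ (B:ℝ) * q < 1) :
    Tendsto (fun N : ℕ => ((2 : ℕ) ^ ⌊B * N⌋₊ : ℝ) * q ^ (N - 1)) atTop (𝓝 0) := by
  have hr0 : 0 ≤ (2:ℝ) ^ (B:ℝ) * q := by positivity
  have hgeo : Tendsto (fun N : ℕ => (2:ℝ) ^ (B:ℝ) * ((2:ℝ) ^ (B:ℝ) * q) ^ (N - 1)) atTop (𝓝 0) := by
    have := (tendsto_pow_atTop_nhds_zero_of_lt_one hr0 hlt).comp (tendsto_sub_atTop_nat 1)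
    have h2 := this.const_mul ((2:ℝ) ^ (B:ℝ))
    simpa using h2
  apply squeeze_zero' (g := fun N : ℕ => (2:ℝ) ^ (B:ℝ) * ((2:ℝ) ^ (B:ℝ) * q) ^ (N - 1))
    (Eventually.of_forall fun N => by positivity) _ hgeo
  filter_upwards [eventually_ge_atTop 1] with N hN
  calc ((2 : ℕ) ^ ⌊B * N⌋₊ : ℝ) * q ^ (N - 1) ≤ (2:ℝ) ^ (B * N) * q ^ (N - 1) := by
        apply mul_le_mul_of_nonneg_right (aux_floor_pow_le hB N) (by positivity)
    _ = (2:ℝ) ^ (B:ℝ) * ((2:ℝ) ^ (B:ℝ) * q) ^ (N - 1) := aux_rpow_split hB hN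

lemma aux_exp {B s : ℝ} (hB : 0 < B) (hs : 0 ≤ s) (hgt : 1 < (2:ℝ) ^ (B:ℝ) * s) :
    Tendsto (fun N : ℕ => Real.exp (-(((2 : ℕ) ^ ⌊B * N⌋₊ : ℝ) * s ^ (N - 1)))) atTop (𝓝 0) := by
  have hinner : Tendsto (fun N : ℕ => ((2 : ℕ) ^ ⌊B * N⌋₊ : ℝ) * s ^ (N - 1)) atTop atTop := by
    have hgeo : Tendsto (fun N : ℕ => (2:ℝ) ^ (B - 1 : ℝ) * ((2:ℝ) ^ (B:ℝ) * s) ^ (N - 1))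
        atTop atTop := by
      apply Tendsto.const_mul_atTop (by positivity)
      exact (tendsto_pow_atTop_atTop_of_one_lt hgt).comp (tendsto_sub_atTop_nat 1)
    apply tendsto_atTop_mono' _ _ hgeo
    filter_upwards [eventually_ge_atTop 1] with N hN
    have h1 : (2:ℝ) ^ (B - 1 : ℝ) * ((2:ℝ) ^ (B:ℝ) * s) ^ (N - 1)
        = (2:ℝ) ^ (-1 : ℝ) * ((2:ℝ) ^ (B * N) * s ^ (N - 1)) := by
      rw [aux_rpow_split hB hN, ← mul_assoc, ← Real.rpow_add (by norm_num : (0:ℝ) < 2)]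
      ring_nf
    rw [h1]
    calc (2:ℝ) ^ (-1:ℝ) * ((2:ℝ) ^ (B * N) * s ^ (N - 1))
        = (2:ℝ) ^ (B * N - 1) * s ^ (N - 1) := by
          rw [← mul_assoc, ← Real.rpow_add (by norm_num : (0:ℝ) < 2)]; ring_nf
      _ ≤ ((2 : ℕ) ^ ⌊B * N⌋₊ : ℝ) * s ^ (N - 1) :=
          mul_le_mul_of_nonneg_right (aux_pow_le_floor_pow hB N) (by positivity)
  exact Real.tendsto_exp_neg_atTop_nhds_zero.comp hinner

lemma aux_eval_measure {n : ℕ} (ν : Measure ℝ) [IsProbabilityMeasure ν] (j : Fin n)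
    {s : Set ℝ} (hs : MeasurableSet s) :
    Measure.pi (fun _ : Fin n => ν) (Function.eval j ⁻¹' s) = ν s := by
  rw [← Set.univ_pi_update_univ, Measure.pi_pi]
  rw [Finset.prod_eq_single j (fun k _ hk => by simp [Function.update_of_ne hk])
    (fun h => absurd (Finset.mem_univ j) h)]
  simp

lemma aux_M_meas {n : ℕ} : Measurable (fun y : Fin n → ℝ => ⨆ j, y j) :=
  Measurable.iSup fun j => measurable_pi_apply j

variable {N : ℕ} {ν : Measure ℝ} [IsProbabilityMeasure ν]

lemma aux_Ioi (hN : 2 ≤ N)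
    (hcdf : ∀ y ∈ Set.Icc (0 : ℝ) 1, ν (Set.Iic y) = ENNReal.ofReal (1 - (1 - y) ^ (N - 1)))
    {t : ℝ} (ht : t ∈ Set.Icc (0:ℝ) 1) :
    ν (Set.Ioi t) = ENNReal.ofReal ((1 - t) ^ (N - 1)) := by
  have h1 : (1 - t) ^ (N - 1) ≤ 1 := by
    apply pow_le_one₀ (by linarith [ht.2]) (by linarith [ht.1])
  have := measure_compl (measurableSet_Iic (a := t)) (measure_ne_top ν _)
  rw [Set.compl_Iic, hcdf t ht, measure_univ] at this
  rw [this, ← ENNReal.ofReal_one, ← ENNReal.ofReal_sub _ (by linarith : (0:ℝ) ≤ 1 - (1-t)^(N-1))]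
  norm_num

lemma aux_ae_Ioc (hN : 2 ≤ N)
    (hcdf : ∀ y ∈ Set.Icc (0 : ℝ) 1, ν (Set.Iic y) = ENNReal.ofReal (1 - (1 - y) ^ (N - 1))) :
    ∀ᵐ x ∂ν, x ∈ Set.Ioc (0:ℝ) 1 := by
  have h0 : ν (Set.Iic 0) = 0 := by
    rw [hcdf 0 ⟨le_rfl, zero_le_one⟩]; simp
  have h1 : ν (Set.Ioi 1) = 0 := by
    rw [aux_Ioi hN hcdf ⟨zero_le_one, le_rfl⟩]
    rw [sub_self, zero_pow (by omega : N - 1 ≠ 0)]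
    simp
  have hsub : {x : ℝ | x ∉ Set.Ioc (0:ℝ) 1} ⊆ Set.Iic 0 ∪ Set.Ioi 1 := by
    intro x hx
    simp only [Set.mem_Ioc, Set.mem_setOf_eq, not_and_or, not_lt, not_le] at hx
    rcases hx with h | h
    · exact Or.inl h
    · exact Or.inr h
  have : ν (Set.Iic 0 ∪ Set.Ioi 1) = 0 := measure_union_null h0 h1
  exact measure_mono_null hsub this

lemma aux_M_ae {n : ℕ} (hn : 0 < n) (hN : 2 ≤ N)
    (hcdf : ∀ y ∈ Set.Icc (0 : ℝ) 1, ν (Set.Iic y) = ENNReal.ofReal (1 - (1 - y) ^ (N - 1))) :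
    ∀ᵐ y ∂(Measure.pi fun _ : Fin n => ν), (⨆ j, y j) ∈ Set.Ioc (0:ℝ) 1 := by
  haveI : Nonempty (Fin n) := Fin.pos_iff_nonempty.mp hn
  have h := aux_ae_Ioc hN hcdf
  have hall : ∀ᵐ y ∂(Measure.pi fun _ : Fin n => ν), ∀ j, y j ∈ Set.Ioc (0:ℝ) 1 := by
    rw [ae_all_iff]
    intro j
    exact Measure.tendsto_eval_ae_ae.eventually h
  filter_upwards [hall] with y hy
  constructor
  · exact lt_of_lt_of_le (hy (Classical.arbitrary _)).1 (le_ciSup (Finite.bddAbove_range _) _)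
  · exact ciSup_le fun j => (hy j).2

lemma aux_upper {n : ℕ} (hn : 0 < n) (hN : 2 ≤ N)
    (hcdf : ∀ y ∈ Set.Icc (0 : ℝ) 1, ν (Set.Iic y) = ENNReal.ofReal (1 - (1 - y) ^ (N - 1)))
    {t : ℝ} (ht : t ∈ Set.Icc (0:ℝ) 1) :
    Measure.pi (fun _ : Fin n => ν) {y | t < ⨆ j, y j}
      ≤ ENNReal.ofReal ((n : ℝ) * (1 - t) ^ (N - 1)) := by
  haveI : Nonempty (Fin n) := Fin.pos_iff_nonempty.mp hn
  have hsub : {y : Fin n → ℝ | t < ⨆ j, y j} ⊆ ⋃ j, Function.eval j ⁻¹' Set.Ioi t := by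
    intro y hy
    by_contra hcon
    simp only [Set.mem_iUnion, Set.mem_preimage, Function.eval, Set.mem_Ioi, not_exists,
      not_lt] at hcon
    exact absurd (ciSup_le hcon) (not_le.mpr hy)
  calc Measure.pi (fun _ : Fin n => ν) {y | t < ⨆ j, y j}
      ≤ Measure.pi (fun _ : Fin n => ν) (⋃ j, Function.eval j ⁻¹' Set.Ioi t) :=
        measure_mono hsub
    _ ≤ ∑' j : Fin n, Measure.pi (fun _ : Fin n => ν) (Function.eval j ⁻¹' Set.Ioi t) :=
        measure_iUnion_le _
    _ = ∑' _j : Fin n, ν (Set.Ioi t) :=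
        tsum_congr fun j => aux_eval_measure ν j measurableSet_Ioi
    _ = (n : ℝ≥0∞) * ν (Set.Ioi t) := by
        rw [tsum_fintype]
        simp [Finset.sum_const, Fintype.card_fin, nsmul_eq_mul]
    _ = ENNReal.ofReal ((n : ℝ) * (1 - t) ^ (N - 1)) := by
        rw [aux_Ioi hN hcdf ht, ← ENNReal.ofReal_natCast n,
          ← ENNReal.ofReal_mul (by positivity)]

lemma aux_lower {n : ℕ} (hn : 0 < n) (hN : 2 ≤ N)
    (hcdf : ∀ y ∈ Set.Icc (0 : ℝ) 1, ν (Set.Iic y) = ENNReal.ofReal (1 - (1 - y) ^ (N - 1)))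
    {t : ℝ} (ht : t ∈ Set.Icc (0:ℝ) 1) :
    Measure.pi (fun _ : Fin n => ν) {y | (⨆ j, y j) ≤ t}
      = (ENNReal.ofReal (1 - (1 - t) ^ (N - 1))) ^ n := by
  haveI : Nonempty (Fin n) := Fin.pos_iff_nonempty.mp hn
  have hset : {y : Fin n → ℝ | (⨆ j, y j) ≤ t} = Set.pi Set.univ (fun _ => Set.Iic t) := by
    ext y
    simp only [Set.mem_setOf_eq, Set.mem_pi, Set.mem_univ, Set.mem_Iic, forall_true_left,
      true_implies]
    constructor
    · intro h j
      exact le_trans (le_ciSup (Finite.bddAbove_range _) j) h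
    · intro h
      exact ciSup_le h
  rw [hset, Measure.pi_pi]
  simp [hcdf t ht, Finset.prod_const, Fintype.card_fin]

lemma aux_key {n : ℕ} (hn : 0 < n) (hN : 2 ≤ N)
    (hcdf : ∀ y ∈ Set.Icc (0 : ℝ) 1, ν (Set.Iic y) = ENNReal.ofReal (1 - (1 - y) ^ (N - 1)))
    {c ε : ℝ} (hc0 : 0 < c) (hc1 : c < 1) (hε0 : 0 < ε) (hεc : ε < c) (hεm : ε < 1 - c) :
    (∫ y : Fin n → ℝ, ((⨆ j, y j) - (1 - c)) ^ 2 ∂(Measure.pi fun _ : Fin n => ν))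
      ≤ ε ^ 2 + ((n : ℝ) * (c - ε) ^ (N - 1) + Real.exp (-((n : ℝ) * (c + ε) ^ (N - 1)))) ∧
    |(∫ y : Fin n → ℝ, (⨆ j, y j) ∂(Measure.pi fun _ : Fin n => ν)) - (1 - c)|
      ≤ ε + ((n : ℝ) * (c - ε) ^ (N - 1) + Real.exp (-((n : ℝ) * (c + ε) ^ (N - 1)))) := by
  set μ := Measure.pi fun _ : Fin n => ν with hμ
  set m := 1 - c with hm
  set A := (n : ℝ) * (c - ε) ^ (N - 1) with hA
  set C := Real.exp (-((n : ℝ) * (c + ε) ^ (N - 1))) with hC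
  have hA0 : 0 ≤ A := by
    have : (0:ℝ) ≤ c - ε := by linarith
    positivity
  have hC0 : 0 ≤ C := (Real.exp_pos _).le
  set S := {y : Fin n → ℝ | ε < |(⨆ j, y j) - m|} with hSdef
  have hSmeas : MeasurableSet S :=
    measurableSet_lt measurable_const ((aux_M_meas.sub measurable_const).abs)
  -- tail bounds
  have hTup : μ {y : Fin n → ℝ | m + ε < ⨆ j, y j} ≤ ENNReal.ofReal A := by
    have h := aux_upper (ν := ν) hn hN hcdf (t := m + ε) ⟨by linarith, by linarith⟩
    have h2 : 1 - (m + ε) = c - ε := by rw [hm]; ring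
    rwa [h2] at h
  have hTlo : μ {y : Fin n → ℝ | (⨆ j, y j) ≤ m - ε} ≤ ENNReal.ofReal C := by
    rw [aux_lower (ν := ν) hn hN hcdf (t := m - ε) ⟨by linarith, by linarith⟩]
    have h2 : 1 - (m - ε) = c + ε := by rw [hm]; ring
    rw [h2]
    set s := c + ε with hs
    have hs0 : 0 < s := by linarith
    have hs1 : s ≤ 1 := by linarith
    have hp0 : (0:ℝ) ≤ 1 - s ^ (N - 1) := by
      have := pow_le_one₀ hs0.le hs1 (n := N - 1)
      linarith
    rw [← ENNReal.ofReal_pow hp0]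
    apply ENNReal.ofReal_le_ofReal
    calc (1 - s ^ (N - 1)) ^ n ≤ (Real.exp (-(s ^ (N - 1)))) ^ n := by
          apply pow_le_pow_left₀ hp0
          have := Real.add_one_le_exp (-(s ^ (N - 1)))
          linarith
      _ = Real.exp (-((n : ℝ) * s ^ (N - 1))) := by
          rw [← Real.exp_nat_mul, mul_neg]
  have hSsub : S ⊆ {y : Fin n → ℝ | m + ε < ⨆ j, y j} ∪ {y : Fin n → ℝ | (⨆ j, y j) ≤ m - ε} := by
    intro y hy
    have hy' : ε < |(⨆ j, y j) - m| := hy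
    rcases lt_abs.mp hy' with h | h
    · exact Or.inl (by simp only [Set.mem_setOf_eq]; linarith)
    · exact Or.inr (by simp only [Set.mem_setOf_eq]; linarith)
  have hμS : μ S ≤ ENNReal.ofReal (A + C) := by
    calc μ S ≤ μ ({y : Fin n → ℝ | m + ε < ⨆ j, y j} ∪ {y : Fin n → ℝ | (⨆ j, y j) ≤ m - ε}) :=
          measure_mono hSsub
      _ ≤ μ {y : Fin n → ℝ | m + ε < ⨆ j, y j} + μ {y : Fin n → ℝ | (⨆ j, y j) ≤ m - ε} :=
          measure_union_le _ _
      _ ≤ ENNReal.ofReal A + ENNReal.ofReal C := add_le_add hTup hTlo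
      _ = ENNReal.ofReal (A + C) := (ENNReal.ofReal_add hA0 hC0).symm
  have hTR : (μ S).toReal ≤ A + C := by
    have h := ENNReal.toReal_mono ENNReal.ofReal_ne_top hμS
    rwa [ENNReal.toReal_ofReal (by linarith)] at h
  -- integrability
  have hMae := aux_M_ae (ν := ν) hn hN hcdf
  have hm0 : 0 < m := by rw [hm]; linarith
  have hm1 : m < 1 := by rw [hm]; linarith
  have hint_sq : ∀ a : ℝ, Integrable (fun y : Fin n → ℝ => ((⨆ j, y j) - a) ^ 2) μ := by
    intro a
    apply memLp_one_iff_integrable.mp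
    apply MemLp.of_bound (((aux_M_meas.sub measurable_const).pow_const 2).aestronglyMeasurable)
      ((1 + |a|) ^ 2)
    filter_upwards [hMae] with y hy
    rw [Real.norm_eq_abs, abs_of_nonneg (sq_nonneg _)]
    have ha1 := neg_abs_le a
    have ha2 := le_abs_self a
    have hb1 := hy.1
    have hb2 := hy.2
    have h1 : -(1 + |a|) ≤ (⨆ j, y j) - a := by linarith
    have h2 : (⨆ j, y j) - a ≤ 1 + |a| := by linarith
    exact sq_le_sq' h1 h2
  have hint_M : Integrable (fun y : Fin n → ℝ => ⨆ j, y j) μ := by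
    apply memLp_one_iff_integrable.mp
    apply MemLp.of_bound (aux_M_meas.aestronglyMeasurable) 1
    filter_upwards [hMae] with y hy
    rw [Real.norm_eq_abs, abs_of_nonneg hy.1.le]
    exact hy.2
  have hint_ind : Integrable (S.indicator fun _ => (1:ℝ)) μ :=
    (integrable_const 1).indicator hSmeas
  have hind_int : ∫ y, S.indicator (fun _ => (1:ℝ)) y ∂μ = (μ S).toReal := by
    rw [integral_indicator_const (1:ℝ) hSmeas, smul_eq_mul, mul_one, measureReal_def]
  constructor
  · -- K bound
    calc (∫ y : Fin n → ℝ, ((⨆ j, y j) - m) ^ 2 ∂μ)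
        ≤ ∫ y : Fin n → ℝ, (ε ^ 2 + S.indicator (fun _ => (1:ℝ)) y) ∂μ := by
          apply integral_mono_ae (hint_sq m) ((integrable_const _).add hint_ind)
          filter_upwards [hMae] with y hy
          simp only [Pi.add_apply]
          by_cases hyS : y ∈ S
          · rw [Set.indicator_of_mem hyS]
            have h1 := hy.1
            have h2 := hy.2
            nlinarith [sq_nonneg ε]
          · rw [Set.indicator_of_notMem hyS]
            have habs : |(⨆ j, y j) - m| ≤ ε := by
              by_contra hcon
              exact hyS (by simpa [hSdef] using not_le.mp hcon)
            rcases abs_le.mp habs with ⟨h1, h2⟩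
            have := sq_le_sq' h1 h2
            linarith
      _ = ε ^ 2 + (μ S).toReal := by
          rw [integral_add (integrable_const _) hint_ind, integral_const, hind_int]
          simp
      _ ≤ ε ^ 2 + (A + C) := by linarith
  · -- I bound
    have hsub_int : ∫ y : Fin n → ℝ, ((⨆ j, y j) - m) ∂μ
        = (∫ y : Fin n → ℝ, (⨆ j, y j) ∂μ) - m := by
      rw [integral_sub hint_M (integrable_const m), integral_const]
      simp
    rw [← hsub_int]
    calc |∫ y : Fin n → ℝ, ((⨆ j, y j) - m) ∂μ|
        ≤ ∫ y : Fin n → ℝ, |(⨆ j, y j) - m| ∂μ := by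
          simpa [Real.norm_eq_abs] using
            norm_integral_le_integral_norm (fun y : Fin n → ℝ => (⨆ j, y j) - m) (μ := μ)
      _ ≤ ∫ y : Fin n → ℝ, (ε + S.indicator (fun _ => (1:ℝ)) y) ∂μ := by
          apply integral_mono_ae (hint_M.sub (integrable_const m)).abs
            ((integrable_const _).add hint_ind)
          filter_upwards [hMae] with y hy
          simp only [Pi.add_apply, Pi.sub_apply]
          by_cases hyS : y ∈ S
          · rw [Set.indicator_of_mem hyS]
            have h1 := hy.1
            have h2 := hy.2
            rw [abs_le]
            constructor <;> [linarith; linarith]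
          · rw [Set.indicator_of_notMem hyS]
            have habs : |(⨆ j, y j) - m| ≤ ε := by
              by_contra hcon
              exact hyS (by simpa [hSdef] using not_le.mp hcon)
            linarith [habs]
      _ = ε + (μ S).toReal := by
          rw [integral_add (integrable_const _) hint_ind, integral_const, hind_int]
          simp
      _ ≤ ε + (A + C) := by linarith

lemma aux_int_sq {n : ℕ} (hn : 0 < n) (hN : 2 ≤ N)
    (hcdf : ∀ y ∈ Set.Icc (0 : ℝ) 1, ν (Set.Iic y) = ENNReal.ofReal (1 - (1 - y) ^ (N - 1)))
    (a : ℝ) :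
    Integrable (fun y : Fin n → ℝ => ((⨆ j, y j) - a) ^ 2) (Measure.pi fun _ : Fin n => ν) := by
  apply memLp_one_iff_integrable.mp
  apply MemLp.of_bound (((aux_M_meas.sub measurable_const).pow_const 2).aestronglyMeasurable)
    ((1 + |a|) ^ 2)
  filter_upwards [aux_M_ae hn hN hcdf] with y hy
  rw [Real.norm_eq_abs, abs_of_nonneg (sq_nonneg _)]
  have ha1 := neg_abs_le a
  have ha2 := le_abs_self a
  have hb1 := hy.1
  have hb2 := hy.2
  exact sq_le_sq' (by simp only [Pi.sub_apply]; linarith) (by simp only [Pi.sub_apply]; linarith)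

lemma aux_V {n : ℕ} (hn : 0 < n) (hN : 2 ≤ N)
    (hcdf : ∀ y ∈ Set.Icc (0 : ℝ) 1, ν (Set.Iic y) = ENNReal.ofReal (1 - (1 - y) ^ (N - 1)))
    (a b : ℝ) :
    (∫ y : Fin n → ℝ, ((⨆ j, y j) - b) ^ 2 ∂(Measure.pi fun _ : Fin n => ν))
      ≤ 2 * (∫ y : Fin n → ℝ, ((⨆ j, y j) - a) ^ 2 ∂(Measure.pi fun _ : Fin n => ν))
        + 2 * (a - b) ^ 2 := by
  have h1 : (∫ y : Fin n → ℝ, ((⨆ j, y j) - b) ^ 2 ∂(Measure.pi fun _ : Fin n => ν))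
      ≤ ∫ y : Fin n → ℝ, (2 * ((⨆ j, y j) - a) ^ 2 + 2 * (a - b) ^ 2)
          ∂(Measure.pi fun _ : Fin n => ν) := by
    apply integral_mono (aux_int_sq hn hN hcdf b)
      (((aux_int_sq hn hN hcdf a).const_mul 2).add (integrable_const _))
    intro y
    simp only [Pi.add_apply]
    nlinarith [sq_nonneg (((⨆ j, y j) - a) - (a - b))]
  rw [integral_add ((aux_int_sq hn hN hcdf a).const_mul 2) (integrable_const _),
    integral_const_mul, integral_const] at h1
  simpa using h1
end StmtFiveAux

/-- Fix `B̄ > 0`.  For each `N_t ≥ 2`, let `n = 2^⌊B̄ N_t⌋` and let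
`Y₁, …, Y_n` be i.i.d. with cdf `F(y) = 1 − (1 − y)^{N_t − 1}` on `[0, 1]`.  Then, as
`N_t → ∞`, `E[maxⱼ Yⱼ] → 1 − 2^{−B̄}` and `Var[maxⱼ Yⱼ] → 0`, i.e. `maxⱼ Yⱼ` converges in
mean square to the constant `1 − 2^{−B̄}`. -/
theorem stmt_5 (B : ℝ) (hB : 0 < B) (ν : ℕ → Measure ℝ)
    (hprob : ∀ N, 2 ≤ N → IsProbabilityMeasure (ν N))
    (hcdf : ∀ N, 2 ≤ N → ∀ y ∈ Set.Icc (0 : ℝ) 1,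
      ν N (Set.Iic y) = ENNReal.ofReal (1 - (1 - y) ^ (N - 1))) :
    Filter.Tendsto (fun N : ℕ =>
        ∫ y : Fin (2 ^ ⌊B * N⌋₊) → ℝ, (⨆ j, y j)
          ∂(Measure.pi fun _ : Fin (2 ^ ⌊B * N⌋₊) => ν N))
      Filter.atTop (nhds (1 - (2 : ℝ) ^ (-B))) ∧
    Filter.Tendsto (fun N : ℕ =>
        ∫ y : Fin (2 ^ ⌊B * N⌋₊) → ℝ,
          ((⨆ j, y j) -
            ∫ y' : Fin (2 ^ ⌊B * N⌋₊) → ℝ, (⨆ j, y' j)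
              ∂(Measure.pi fun _ : Fin (2 ^ ⌊B * N⌋₊) => ν N)) ^ 2
          ∂(Measure.pi fun _ : Fin (2 ^ ⌊B * N⌋₊) => ν N))
      Filter.atTop (nhds 0) ∧
    Filter.Tendsto (fun N : ℕ =>
        ∫ y : Fin (2 ^ ⌊B * N⌋₊) → ℝ, ((⨆ j, y j) - (1 - (2 : ℝ) ^ (-B))) ^ 2
          ∂(Measure.pi fun _ : Fin (2 ^ ⌊B * N⌋₊) => ν N))
      Filter.atTop (nhds 0) := by
  have h2B0 : (0:ℝ) < (2:ℝ) ^ (B:ℝ) := Real.rpow_pos_of_pos two_pos _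
  have hc0 : (0:ℝ) < (2:ℝ) ^ (-B) := Real.rpow_pos_of_pos two_pos _
  have hc1 : (2:ℝ) ^ (-B) < 1 :=
    Real.rpow_lt_one_of_one_lt_of_neg one_lt_two (neg_lt_zero.mpr hB)
  have h2B : (2:ℝ) ^ (B:ℝ) * (2:ℝ) ^ (-B) = 1 := by
    rw [← Real.rpow_add two_pos]
    simp
  have hnpos : ∀ N : ℕ, 0 < 2 ^ ⌊B * (N:ℕ)⌋₊ := fun N => pow_pos (by norm_num) _
  -- the main claim
  have claim : ∀ ε > 0, ∀ᶠ N : ℕ in atTop,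
      (∫ y : Fin (2 ^ ⌊B * N⌋₊) → ℝ, ((⨆ j, y j) - (1 - (2 : ℝ) ^ (-B))) ^ 2
          ∂(Measure.pi fun _ : Fin (2 ^ ⌊B * N⌋₊) => ν N)) < ε ∧
      |(∫ y : Fin (2 ^ ⌊B * N⌋₊) → ℝ, (⨆ j, y j)
          ∂(Measure.pi fun _ : Fin (2 ^ ⌊B * N⌋₊) => ν N)) - (1 - (2 : ℝ) ^ (-B))| < ε := by
    intro ε hε
    set c := (2:ℝ) ^ (-B) with hcdef
    set ε' := min (ε/2) (min c (1 - c)) / 2 with hε'def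
    have hmin_pos : 0 < min (ε/2) (min c (1 - c)) :=
      lt_min (by linarith) (lt_min hc0 (by linarith))
    have hε'0 : 0 < ε' := by rw [hε'def]; linarith
    have hε'c : ε' < c := by
      have h1 : min (ε/2) (min c (1 - c)) ≤ c := le_trans (min_le_right _ _) (min_le_left _ _)
      rw [hε'def]; linarith
    have hε'm : ε' < 1 - c := by
      have h1 : min (ε/2) (min c (1 - c)) ≤ 1 - c :=
        le_trans (min_le_right _ _) (min_le_right _ _)
      rw [hε'def]; linarith
    have hε'ε : ε' ≤ ε / 4 := by
      have h1 : min (ε/2) (min c (1 - c)) ≤ ε/2 := min_le_left _ _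
      rw [hε'def]; linarith
    have hA := aux_geo (q := c - ε') hB (by linarith)
      (by rw [mul_sub, h2B]; nlinarith)
    have hC := aux_exp (s := c + ε') hB (by linarith)
      (by rw [mul_add, h2B]; nlinarith)
    have hsum : Tendsto (fun N : ℕ => ((2 : ℕ) ^ ⌊B * N⌋₊ : ℝ) * (c - ε') ^ (N - 1)
        + Real.exp (-(((2 : ℕ) ^ ⌊B * N⌋₊ : ℝ) * (c + ε') ^ (N - 1)))) atTop (𝓝 0) := by
      simpa using hA.add hC
    filter_upwards [hsum.eventually (gt_mem_nhds (by linarith : (0:ℝ) < ε/2)),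
      eventually_ge_atTop 2] with N hts hN2
    haveI := hprob N hN2
    have hkey := aux_key (ν := ν N) (n := 2 ^ ⌊B * (N:ℕ)⌋₊) (hnpos N) hN2 (hcdf N hN2)
      hc0 hc1 hε'0 hε'c hε'm
    have hsq : ε' ^ 2 ≤ ε' := by nlinarith
    constructor
    · calc (∫ y : Fin (2 ^ ⌊B * N⌋₊) → ℝ, ((⨆ j, y j) - (1 - c)) ^ 2
            ∂(Measure.pi fun _ : Fin (2 ^ ⌊B * N⌋₊) => ν N))
          ≤ ε' ^ 2 + (((2 ^ ⌊B * (N:ℕ)⌋₊ : ℕ) : ℝ) * (c - ε') ^ (N - 1)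
            + Real.exp (-(((2 ^ ⌊B * (N:ℕ)⌋₊ : ℕ) : ℝ) * (c + ε') ^ (N - 1)))) := hkey.1
        _ < ε := by push_cast at hts ⊢; linarith
    · calc |(∫ y : Fin (2 ^ ⌊B * N⌋₊) → ℝ, (⨆ j, y j)
            ∂(Measure.pi fun _ : Fin (2 ^ ⌊B * N⌋₊) => ν N)) - (1 - c)|
          ≤ ε' + (((2 ^ ⌊B * (N:ℕ)⌋₊ : ℕ) : ℝ) * (c - ε') ^ (N - 1)
            + Real.exp (-(((2 ^ ⌊B * (N:ℕ)⌋₊ : ℕ) : ℝ) * (c + ε') ^ (N - 1)))) := hkey.2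
        _ < ε := by push_cast at hts ⊢; linarith
  -- the three limits
  have hK : Filter.Tendsto (fun N : ℕ =>
      ∫ y : Fin (2 ^ ⌊B * N⌋₊) → ℝ, ((⨆ j, y j) - (1 - (2 : ℝ) ^ (-B))) ^ 2
        ∂(Measure.pi fun _ : Fin (2 ^ ⌊B * N⌋₊) => ν N)) Filter.atTop (nhds 0) := by
    rw [NormedAddCommGroup.tendsto_nhds_zero]
    intro ε hε
    filter_upwards [claim ε hε] with N h
    rw [Real.norm_eq_abs, abs_of_nonneg (integral_nonneg fun y => sq_nonneg _)]
    exact h.1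
  have hI : Filter.Tendsto (fun N : ℕ =>
      ∫ y : Fin (2 ^ ⌊B * N⌋₊) → ℝ, (⨆ j, y j)
        ∂(Measure.pi fun _ : Fin (2 ^ ⌊B * N⌋₊) => ν N)) Filter.atTop
      (nhds (1 - (2 : ℝ) ^ (-B))) := by
    rw [Metric.tendsto_atTop]
    intro ε hε
    obtain ⟨N₀, h⟩ := eventually_atTop.mp (claim ε hε)
    exact ⟨N₀, fun n hn => by rw [Real.dist_eq]; exact (h n hn).2⟩
  refine ⟨hI, ?_, hK⟩
  -- variance part
  have hIm : Filter.Tendsto (fun N : ℕ =>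
      2 * (∫ y : Fin (2 ^ ⌊B * N⌋₊) → ℝ, ((⨆ j, y j) - (1 - (2 : ℝ) ^ (-B))) ^ 2
        ∂(Measure.pi fun _ : Fin (2 ^ ⌊B * N⌋₊) => ν N))
      + 2 * ((1 - (2 : ℝ) ^ (-B)) - ∫ y : Fin (2 ^ ⌊B * N⌋₊) → ℝ, (⨆ j, y j)
        ∂(Measure.pi fun _ : Fin (2 ^ ⌊B * N⌋₊) => ν N)) ^ 2) Filter.atTop (nhds 0) := by
    have h1 := (tendsto_const_nhds (x := (1 - (2 : ℝ) ^ (-B))) (f := atTop (α := ℕ))).sub hI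
    have h2 : Filter.Tendsto (fun N : ℕ =>
        ((1 - (2 : ℝ) ^ (-B)) - ∫ y : Fin (2 ^ ⌊B * N⌋₊) → ℝ, (⨆ j, y j)
          ∂(Measure.pi fun _ : Fin (2 ^ ⌊B * N⌋₊) => ν N)) ^ 2) Filter.atTop (nhds 0) := by
      have := h1.pow 2
      simpa using this
    have := (hK.const_mul 2).add (h2.const_mul 2)
    simpa using this
  apply squeeze_zero' (g := fun N : ℕ =>
      2 * (∫ y : Fin (2 ^ ⌊B * N⌋₊) → ℝ, ((⨆ j, y j) - (1 - (2 : ℝ) ^ (-B))) ^ 2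
        ∂(Measure.pi fun _ : Fin (2 ^ ⌊B * N⌋₊) => ν N))
      + 2 * ((1 - (2 : ℝ) ^ (-B)) - ∫ y : Fin (2 ^ ⌊B * N⌋₊) → ℝ, (⨆ j, y j)
        ∂(Measure.pi fun _ : Fin (2 ^ ⌊B * N⌋₊) => ν N)) ^ 2)
    (Eventually.of_forall fun N => integral_nonneg fun y => sq_nonneg _) ?_ hIm
  filter_upwards [eventually_ge_atTop 2] with N hN2
  haveI := hprob N hN2
  exact aux_V (ν := ν N) (hnpos N) hN2 (hcdf N hN2) (1 - (2 : ℝ) ^ (-B)) _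
end

section
/- Let N_t ≥ 2 be an integer and B ≥ 0 a real number, and set s* = 1 − 2^{−B/(N_t − 1)}. Let μ be a random variable taking values in [0, 1] such that P(μ > s) ≤ 2^B (1 − s)^{N_t − 1} for all s ∈ [s*, 1]. Then E[μ] ≤ 1 − 2^{−B/(N_t−1)} + (1/N_t) 2^{−B/(N_t−1)}. -/
open MeasureTheory ProbabilityTheory Filter Real
open scoped ENNReal NNReal Topology

/-- Let `N_t ≥ 2`, `B ≥ 0`, and `s* = 1 − 2^{−B/(N_t−1)}`.  If `μ` is a
random variable with values in `[0, 1]` such that `P(μ > s) ≤ 2^B (1 − s)^{N_t−1}` for all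
`s ∈ [s*, 1]`, then `E[μ] ≤ 1 − 2^{−B/(N_t−1)} + (1/N_t) 2^{−B/(N_t−1)}`. -/
theorem stmt_6 (N : ℕ) (hN : 2 ≤ N) (B : ℝ) (hB : 0 ≤ B)
    {Ω : Type*} [MeasurableSpace Ω] (P : Measure Ω) [IsProbabilityMeasure P]
    (X : Ω → ℝ) (hmeas : Measurable X) (hrange : ∀ ω, X ω ∈ Set.Icc (0 : ℝ) 1)
    (htail : ∀ s ∈ Set.Icc (1 - (2 : ℝ) ^ (-(B / ((N : ℝ) - 1)))) (1 : ℝ),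
      P {ω | s < X ω} ≤ ENNReal.ofReal ((2 : ℝ) ^ B * (1 - s) ^ (N - 1))) :
    ∫ ω, X ω ∂P ≤
      1 - (2 : ℝ) ^ (-(B / ((N : ℝ) - 1)))
        + (1 / (N : ℝ)) * (2 : ℝ) ^ (-(B / ((N : ℝ) - 1))) := by
  set c : ℝ := (2 : ℝ) ^ (-(B / ((N : ℝ) - 1))) with hc
  have hN1 : (1 : ℝ) ≤ (N : ℝ) - 1 := by
    have : (2 : ℝ) ≤ N := by exact_mod_cast hN
    linarith
  have hNpos : (0 : ℝ) < N := by linarith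
  have hcpos : 0 < c := Real.rpow_pos_of_pos two_pos _
  have hc1 : c ≤ 1 := by
    apply Real.rpow_le_one_of_one_le_of_nonpos one_le_two
    have : 0 ≤ B / ((N : ℝ) - 1) := div_nonneg hB (by linarith)
    linarith
  set s₀ : ℝ := 1 - c with hs₀
  have hs₀0 : 0 ≤ s₀ := by simp only [hs₀]; linarith
  have hs₀1 : s₀ ≤ 1 := by simp only [hs₀]; linarith
  -- key algebraic identity : 2^B * c^(N-1) = 1
  have hcast : ((N - 1 : ℕ) : ℝ) = (N : ℝ) - 1 := by
    have h1 : 1 ≤ N := by omega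
    push_cast [h1]; ring
  have key : (2 : ℝ) ^ B * c ^ (N - 1) = 1 := by
    have h1 : c ^ (N - 1) = (2 : ℝ) ^ (-B) := by
      rw [hc, ← Real.rpow_natCast ((2 : ℝ) ^ (-(B / ((N : ℝ) - 1)))) (N - 1),
        ← Real.rpow_mul two_pos.le]
      congr 1
      rw [hcast]
      field_simp
    rw [h1, ← Real.rpow_add two_pos]
    simp
  -- integrability of X
  have hXint : Integrable X P := by
    refine (integrable_const (1 : ℝ)).mono' hmeas.aestronglyMeasurable ?_
    filter_upwards with ω
    have h := hrange ω
    rw [Real.norm_eq_abs, abs_le]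
    exact ⟨by linarith [h.1], h.2⟩
  have hXnn : 0 ≤ᵐ[P] X := ae_of_all _ fun ω => (hrange ω).1
  rw [hXint.integral_eq_integral_meas_lt hXnn]
  set g : ℝ → ℝ := fun t => (P {a | t < X a}).toReal with hg
  have hganti : Antitone g := by
    intro s t hst
    exact ENNReal.toReal_mono (measure_ne_top _ _)
      (measure_mono fun ω hω => lt_of_le_of_lt hst hω)
  have hgzero : ∀ t, 1 ≤ t → g t = 0 := by
    intro t ht
    have he : {a | t < X a} = ∅ := by
      ext ω
      simp only [Set.mem_setOf_eq, Set.mem_empty_iff_false, iff_false, not_lt]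
      exact (hrange ω).2.trans ht
    simp [hg, he]
  have hg1 : ∀ t, g t ≤ 1 := by
    intro t
    have := ENNReal.toReal_mono ENNReal.one_ne_top (prob_le_one (μ := P) (s := {a | t < X a}))
    simpa using this
  -- restrict the integral to (0, 1]
  have hIoc : ∫ t in Set.Ioi (0 : ℝ), g t = ∫ t in Set.Ioc (0 : ℝ) 1, g t := by
    refine setIntegral_eq_of_subset_of_forall_diff_eq_zero measurableSet_Ioi
      (Set.Ioc_subset_Ioi_self) ?_
    intro t ht
    rcases ht with ⟨ht0, ht1⟩
    apply hgzero
    by_contra h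
    exact ht1 ⟨ht0, by linarith⟩
  change ∫ t in Set.Ioi (0 : ℝ), g t ≤ _
  rw [hIoc]
  -- integrability of g on subintervals
  have hgint : IntegrableOn g (Set.Icc (0 : ℝ) 1) volume :=
    AntitoneOn.integrableOn_isCompact isCompact_Icc (hganti.antitoneOn _)
  have hgint1 : IntegrableOn g (Set.Ioc (0 : ℝ) s₀) volume :=
    hgint.mono_set (Set.Ioc_subset_Icc_self.trans (Set.Icc_subset_Icc le_rfl hs₀1))
  have hgint2 : IntegrableOn g (Set.Ioc s₀ 1) volume :=
    hgint.mono_set (Set.Ioc_subset_Icc_self.trans (Set.Icc_subset_Icc hs₀0 le_rfl))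
  -- split the integral at s₀
  have hsplit : ∫ t in Set.Ioc (0 : ℝ) 1, g t
      = (∫ t in Set.Ioc (0 : ℝ) s₀, g t) + ∫ t in Set.Ioc s₀ 1, g t := by
    rw [← setIntegral_union (Set.Ioc_disjoint_Ioc_of_le le_rfl) measurableSet_Ioc hgint1 hgint2,
      Set.Ioc_union_Ioc_eq_Ioc hs₀0 hs₀1]
  rw [hsplit]
  -- first piece ≤ s₀
  have hA : ∫ t in Set.Ioc (0 : ℝ) s₀, g t ≤ s₀ := by
    have : ∫ t in Set.Ioc (0 : ℝ) s₀, g t ≤ ∫ _t in Set.Ioc (0 : ℝ) s₀, (1 : ℝ) := by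
      refine setIntegral_mono_on hgint1 (integrableOn_const ?_) measurableSet_Ioc
        fun t _ => hg1 t
      simp [Real.volume_Ioc]
    calc ∫ t in Set.Ioc (0 : ℝ) s₀, g t ≤ ∫ _t in Set.Ioc (0 : ℝ) s₀, (1 : ℝ) := this
      _ = s₀ := by
        simp [Real.volume_Ioc, ENNReal.toReal_ofReal hs₀0, hs₀0]
  -- second piece ≤ ∫ 2^B (1-t)^(N-1)
  have hcont : Continuous fun t : ℝ => (2 : ℝ) ^ B * (1 - t) ^ (N - 1) := by continuity
  have hB2 : ∫ t in Set.Ioc s₀ 1, g t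
      ≤ ∫ t in Set.Ioc s₀ 1, (2 : ℝ) ^ B * (1 - t) ^ (N - 1) := by
    refine setIntegral_mono_on hgint2 (hcont.integrableOn_Ioc) measurableSet_Ioc ?_
    intro t ht
    have htmem : t ∈ Set.Icc s₀ 1 := Set.Ioc_subset_Icc_self ht
    have h1 := htail t htmem
    have hnn : 0 ≤ (2 : ℝ) ^ B * (1 - t) ^ (N - 1) := by
      have : (0:ℝ) ≤ 1 - t := by linarith [htmem.2]
      positivity
    have := ENNReal.toReal_mono ENNReal.ofReal_ne_top h1
    rwa [ENNReal.toReal_ofReal hnn] at this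
  -- compute the polynomial integral
  have hval : ∫ t in Set.Ioc s₀ 1, (2 : ℝ) ^ B * (1 - t) ^ (N - 1) = c / N := by
    rw [← intervalIntegral.integral_of_le hs₀1]
    rw [intervalIntegral.integral_const_mul]
    have hsub : (∫ t in s₀..1, (1 - t) ^ (N - 1))
        = ∫ t in (1 - (1:ℝ))..(1 - s₀), t ^ (N - 1) :=
      intervalIntegral.integral_comp_sub_left (fun t => t ^ (N - 1)) 1
    rw [hsub]
    have : (1 : ℝ) - 1 = 0 := by ring
    rw [this]
    have hc' : (1 : ℝ) - s₀ = c := by simp [hs₀]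
    rw [hc', integral_pow]
    have hNsucc : N - 1 + 1 = N := by omega
    rw [hNsucc]
    have hcN : c ^ N = c ^ (N - 1) * c := by
      rw [← pow_succ, hNsucc]
    have hcastN : ((N - 1 : ℕ) : ℝ) + 1 = (N : ℝ) := by rw [hcast]; ring
    rw [hcastN]
    rw [zero_pow (by omega : N ≠ 0), sub_zero, hcN]
    have h2 : (2:ℝ) ^ B * (c ^ (N - 1) * c) = c := by
      calc (2:ℝ) ^ B * (c ^ (N - 1) * c) = ((2:ℝ) ^ B * c ^ (N - 1)) * c := by ring
        _ = c := by rw [key]; ring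
    have hNne : (N : ℝ) ≠ 0 := ne_of_gt hNpos
    field_simp
    linarith [h2]
  have : ∫ t in Set.Ioc s₀ 1, g t ≤ c / N := hval ▸ hB2
  have hfin : s₀ + c / N = 1 - c + (1 / (N : ℝ)) * c := by
    rw [hs₀]; field_simp
  linarith [hA, this]
end

section
/- Let n ≥ 1 and let λ_1 ≥ λ_2 ≥ … ≥ λ_n ≥ 0 be real numbers, let W_1, …, W_n be i.i.d. exponential random variables with rate 1, and let z > 0. Then for every ρ > 0 satisfying 1 + ρ(z − λ_i) > 0 for all i, P( ∑_{i=1}^n λ_i W_i / ∑_{i=1}^n W_i > z ) ≤ ∏_{i=1}^n 1/(1 + ρ(z − λ_i)) = exp( − ∑_{i=1}^n log(1 + ρ(z − λ_i)) ). -/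
open MeasureTheory ProbabilityTheory Filter Real
open scoped ENNReal NNReal Topology


lemma aux_exp_Iio : expMeasure 1 (Set.Iio 0) = 0 := by
  rw [expMeasure, gammaMeasure, withDensity_apply _ measurableSet_Iio]
  exact lintegral_gammaPDF_of_nonpos le_rfl

lemma aux_mgf {t : ℝ} (ht : t < 1) :
    ∫⁻ x, ENNReal.ofReal (Real.exp (t * x)) ∂(expMeasure 1) = ENNReal.ofReal (1 / (1 - t)) := by
  have hb : 0 < 1 - t := by linarith
  have hmeas : Measurable fun x => ENNReal.ofReal (Real.exp (t * x)) :=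
    (Real.measurable_exp.comp (measurable_const_mul t)).ennreal_ofReal
  have hpdf : Measurable (gammaPDF 1 1) := (measurable_gammaPDFReal 1 1).ennreal_ofReal
  rw [expMeasure, gammaMeasure, lintegral_withDensity_eq_lintegral_mul _ hpdf hmeas]
  have key : ∀ x : ℝ, gammaPDF 1 1 x * ENNReal.ofReal (Real.exp (t * x))
      = ENNReal.ofReal (1 - t)⁻¹ * exponentialPDF (1 - t) x := by
    intro x
    rw [show gammaPDF 1 1 x = exponentialPDF 1 x from rfl, exponentialPDF_eq, exponentialPDF_eq]
    split_ifs with h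
    · rw [← ENNReal.ofReal_mul (by positivity), ← ENNReal.ofReal_mul (by positivity)]
      congr 1
      rw [inv_mul_cancel_left₀ hb.ne', one_mul, ← Real.exp_add]
      congr 1; ring
    · simp
  have : (fun a => (gammaPDF 1 1 * fun x => ENNReal.ofReal (Real.exp (t * x))) a)
      = fun a => ENNReal.ofReal (1 - t)⁻¹ * exponentialPDF (1 - t) a := by
    funext a; simpa using key a
  have hpdf2 : Measurable (exponentialPDF (1 - t)) :=
    (measurable_exponentialPDFReal (1 - t)).ennreal_ofReal
  rw [this, lintegral_const_mul _ hpdf2, lintegral_exponentialPDF_eq_one hb, mul_one, one_div]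

lemma aux_pi_prod : ∀ (n : ℕ) (μ : Fin n → Measure ℝ), (∀ i, SigmaFinite (μ i)) →
    ∀ (f : Fin n → ℝ → ℝ≥0∞), (∀ i, Measurable (f i)) →
    ∫⁻ x, ∏ i, f i (x i) ∂Measure.pi μ = ∏ i, ∫⁻ x, f i x ∂(μ i) := by
  intro n
  induction n with
  | zero => intro μ _ f hf; simp [lintegral_const, Measure.pi_univ]
  | succ n ih =>
    intro μ hσ f hf
    have hmp := (measurePreserving_piFinSuccAbove μ 0).symm
    have hFm : Measurable fun x : Fin (n+1) → ℝ => ∏ i, f i (x i) :=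
      Finset.measurable_prod _ fun i _ => (hf i).comp (measurable_pi_apply i)
    rw [← hmp.lintegral_comp hFm]
    simp_rw [MeasurableEquiv.piFinSuccAbove_symm_apply, Fin.insertNthEquiv, Equiv.coe_fn_mk,
      Fin.insertNth_zero, Fin.prod_univ_succ, Fin.cons_zero, Fin.cons_succ, Fin.zero_succAbove, cast_eq]
    have hg : Measurable fun y : Fin n → ℝ => ∏ i, f i.succ (y i) :=
      Finset.measurable_prod _ fun i _ => (hf i.succ).comp (measurable_pi_apply i)
    rw [lintegral_prod_mul (f := f 0) (g := fun y : Fin n → ℝ => ∏ i, f i.succ (y i))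
      ((hf 0).aemeasurable) hg.aemeasurable]
    rw [ih _ (fun i => inferInstance) _ (fun i => hf i.succ)]


/-- Chernoff bound.  Let `λ₁ ≥ … ≥ λ_n ≥ 0`, let `W₁, …, W_n` be i.i.d.
exponential with rate `1`, and let `z > 0`.  For every `ρ > 0` with `1 + ρ(z − λᵢ) > 0` for
all `i`,
`P( ∑ λᵢ Wᵢ / ∑ Wᵢ > z ) ≤ ∏ᵢ 1/(1 + ρ(z − λᵢ)) = exp(−∑ᵢ log(1 + ρ(z − λᵢ)))`. -/
theorem stmt_7 (n : ℕ) (hn : 1 ≤ n) (lam : Fin n → ℝ) (hlam : ∀ i, 0 ≤ lam i)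
    (hmono : Antitone lam) (z ρ : ℝ) (hz : 0 < z) (hρ : 0 < ρ)
    (hpos : ∀ i, 0 < 1 + ρ * (z - lam i)) :
    (Measure.pi fun _ : Fin n => expMeasure 1)
        {w | z < (∑ i, lam i * w i) / (∑ i, w i)}
      ≤ ENNReal.ofReal (∏ i, 1 / (1 + ρ * (z - lam i))) ∧
    (∏ i, 1 / (1 + ρ * (z - lam i)))
      = Real.exp (-∑ i, Real.log (1 + ρ * (z - lam i))) := by
  haveI : IsProbabilityMeasure (expMeasure 1) := isProbabilityMeasure_expMeasure one_pos
  haveI : SigmaFinite (expMeasure 1) := inferInstance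
  constructor
  · set μ := Measure.pi fun _ : Fin n => expMeasure 1 with hμ
    set c : Fin n → ℝ := fun i => ρ * (lam i - z) with hc
    have hc1 : ∀ i, c i < 1 := fun i => by have := hpos i; simp only [hc]; nlinarith
    have hmf : ∀ i : Fin n, Measurable fun x : ℝ => ENNReal.ofReal (Real.exp (c i * x)) :=
      fun i => (Real.measurable_exp.comp (measurable_const_mul _)).ennreal_ofReal
    have hF : Measurable fun w : Fin n → ℝ => ∏ i, ENNReal.ofReal (Real.exp (c i * w i)) :=
      Finset.measurable_prod _ fun i _ => (hmf i).comp (measurable_pi_apply i)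
    -- the negative-coordinate set is null
    have hnull : μ {w : Fin n → ℝ | ¬ ∀ i, 0 ≤ w i} = 0 := by
      have hsub : {w : Fin n → ℝ | ¬ ∀ i, 0 ≤ w i}
          ⊆ ⋃ i : Fin n, Function.eval i ⁻¹' Set.Iio (0 : ℝ) := by
        intro w hw
        push_neg at hw
        obtain ⟨i, hi⟩ := hw
        exact Set.mem_iUnion.2 ⟨i, by simpa [Function.eval] using hi⟩
      refine measure_mono_null hsub (measure_iUnion_null fun i => ?_)
      exact Measure.pi_eval_preimage_null _ aux_exp_Iio
    -- event inclusion
    have hincl : {w : Fin n → ℝ | z < (∑ i, lam i * w i) / (∑ i, w i)} ∩ {w | ∀ i, 0 ≤ w i}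
        ⊆ {w | 1 ≤ ∏ i, ENNReal.ofReal (Real.exp (c i * w i))} := by
      rintro w ⟨hw, hw0⟩
      simp only [Set.mem_setOf_eq] at hw hw0
      have hS0 : 0 ≤ ∑ i, w i := Finset.sum_nonneg fun i _ => hw0 i
      have hS : 0 < ∑ i, w i := by
        rcases hS0.lt_or_eq with h | h
        · exact h
        · exfalso
          rw [← h, div_zero] at hw
          exact absurd hw (not_lt.2 hz.le)
      have h1 : z * (∑ i, w i) < ∑ i, lam i * w i := (lt_div_iff₀ hS).1 hw
      have hsum : 0 < ∑ i, c i * w i := by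
        have : ∑ i, c i * w i = ρ * ((∑ i, lam i * w i) - z * ∑ i, w i) := by
          rw [Finset.mul_sum, ← Finset.sum_sub_distrib, Finset.mul_sum]
          refine Finset.sum_congr rfl fun i _ => ?_
          simp only [hc]; ring
        rw [this]
        exact mul_pos hρ (by linarith)
      show (1 : ℝ≥0∞) ≤ _
      rw [← ENNReal.ofReal_prod_of_nonneg (fun i _ => (Real.exp_pos _).le), ← Real.exp_sum]
      exact ENNReal.one_le_ofReal.2 (Real.one_le_exp hsum.le)
    -- Markov
    have markov := mul_meas_ge_le_lintegral₀ (μ := μ)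
      (f := fun w : Fin n → ℝ => ∏ i, ENNReal.ofReal (Real.exp (c i * w i)))
      hF.aemeasurable 1
    rw [one_mul] at markov
    have step1 : μ {w | z < (∑ i, lam i * w i) / (∑ i, w i)}
        ≤ μ {w | 1 ≤ ∏ i, ENNReal.ofReal (Real.exp (c i * w i))} := by
      calc μ {w | z < (∑ i, lam i * w i) / (∑ i, w i)}
          ≤ μ ({w | z < (∑ i, lam i * w i) / (∑ i, w i)} ∩ {w | ∀ i, 0 ≤ w i}
              ∪ {w : Fin n → ℝ | ¬ ∀ i, 0 ≤ w i}) := by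
            refine measure_mono fun w hw => ?_
            by_cases h : ∀ i, 0 ≤ w i
            · exact Or.inl ⟨hw, h⟩
            · exact Or.inr h
        _ ≤ μ ({w | z < (∑ i, lam i * w i) / (∑ i, w i)} ∩ {w | ∀ i, 0 ≤ w i})
              + μ {w : Fin n → ℝ | ¬ ∀ i, 0 ≤ w i} := measure_union_le _ _
        _ = μ ({w | z < (∑ i, lam i * w i) / (∑ i, w i)} ∩ {w | ∀ i, 0 ≤ w i}) := by
            rw [hnull, add_zero]
        _ ≤ _ := measure_mono hincl
    have step2 : (∫⁻ w, ∏ i, ENNReal.ofReal (Real.exp (c i * w i)) ∂μ)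
        = ENNReal.ofReal (∏ i, 1 / (1 + ρ * (z - lam i))) := by
      rw [hμ, aux_pi_prod n _ (fun i => inferInstance) _ hmf,
        ENNReal.ofReal_prod_of_nonneg (fun i _ => (one_div_pos.2 (hpos i)).le)]
      refine Finset.prod_congr rfl fun i _ => ?_
      rw [aux_mgf (hc1 i)]
      congr 1
      simp only [hc]; ring_nf
    exact le_trans step1 (le_trans markov (le_of_eq step2))
  · rw [← Finset.sum_neg_distrib, Real.exp_sum]
    refine Finset.prod_congr rfl fun i _ => ?_
    rw [Real.exp_neg, Real.exp_log (hpos i), one_div]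
end

section
/- Let 0 < N̄ ≤ 1, set a = (1 − √N̄)² and b = (1 + √N̄)², and let g(λ) = √((λ − a)(b − λ))/(2π λ N̄) on [a, b] be the Marchenko–Pastur density. Then for every ρ > 0, ∫_a^b log(1 + ρ λ) g(λ) dλ = log(ρ y) + ((1 − N̄)/N̄) log( 1/(1 − z) ) − z/N̄, where y = (1/2)( 1 + N̄ + 1/ρ + √( (1 + N̄ + 1/ρ)² − 4N̄ ) ) and z = (1/2)( 1 + N̄ + 1/ρ − √( (1 + N̄ + 1/ρ)² − 4N̄ ) ). -/
open MeasureTheory ProbabilityTheory Filter Real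
open scoped ENNReal NNReal Topology

open Set intervalIntegral

/-- The Marchenko–Pastur density with ratio `N̄`:
`g(λ) = √((λ − a)(b − λ))/(2π λ N̄)` on `[a, b]`, `a = (1 − √N̄)²`, `b = (1 + √N̄)²`. -/
noncomputable def mpDensity (Nb lam : ℝ) : ℝ :=
  Real.sqrt ((lam - (1 - Real.sqrt Nb) ^ 2) * ((1 + Real.sqrt Nb) ^ 2 - lam)) /
    (2 * Real.pi * lam * Nb)

noncomputable def FMP (Nb ρ : ℝ) : ℝ :=
  ∫ lam in ((1 - Real.sqrt Nb)^2)..((1 + Real.sqrt Nb)^2),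
    Real.log (1 + ρ * lam) * mpDensity Nb lam

lemma sqrt_one_sub_sq_div_int (p r : ℝ) (hr : 0 < r) (hpr : r < p) :
    ∫ t in (-1:ℝ)..1, Real.sqrt (1 - t^2) / (p + r*t)
      = Real.pi * (p - Real.sqrt (p^2 - r^2)) / r^2 := by
  have hp : 0 < p := hr.trans hpr
  have hq2 : Real.sqrt (p^2 - r^2) ^ 2 = p^2 - r^2 := Real.sq_sqrt (by nlinarith)
  set q := Real.sqrt (p^2 - r^2) with hqdef
  have hq0 : 0 < q := Real.sqrt_pos.2 (by nlinarith)
  have hden : ∀ t : ℝ, t ∈ Icc (-1:ℝ) 1 → 0 < p + r * t := by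
    intro t ht; nlinarith [ht.1, ht.2]
  set H : ℝ → ℝ := fun t =>
    (p * Real.arcsin t + r * Real.sqrt (1 - t^2)
      - q * Real.arcsin ((r + p*t)/(p + r*t))) / r^2 with hHdef
  have hcont : ContinuousOn H (Icc (-1:ℝ) 1) := by
    apply ContinuousOn.div_const
    apply ContinuousOn.sub
    · exact ((Real.continuous_arcsin.comp continuous_id).const_smul p).continuousOn.add
        (((continuous_const.sub (continuous_pow 2)).sqrt.const_smul r).continuousOn)
    · apply ContinuousOn.const_smul ?_ q
      apply Real.continuous_arcsin.comp_continuousOn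
      exact ContinuousOn.div (by fun_prop) (by fun_prop)
        (fun t ht => (hden t ht).ne')
  have hderiv : ∀ t ∈ Ioo (-1:ℝ) 1,
      HasDerivAt H (Real.sqrt (1 - t^2) / (p + r*t)) t := by
    intro t ht
    have ht1 : -1 < t := ht.1
    have ht2 : t < 1 := ht.2
    have hs2 : (0:ℝ) < 1 - t^2 := by nlinarith
    have hs1 : Real.sqrt (1 - t^2) ^ 2 = 1 - t^2 := Real.sq_sqrt hs2.le
    have hs0 : 0 < Real.sqrt (1 - t^2) := Real.sqrt_pos.2 hs2
    have hd : 0 < p + r * t := hden t ⟨ht1.le, ht2.le⟩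
    have h1 : HasDerivAt Real.arcsin (1 / Real.sqrt (1 - t^2)) t :=
      Real.hasDerivAt_arcsin ht1.ne' ht2.ne
    have h2 : HasDerivAt (fun t : ℝ => Real.sqrt (1 - t^2))
        (-t / Real.sqrt (1 - t^2)) t := by
      have := (Real.hasDerivAt_sqrt hs2.ne').comp t
        ((hasDerivAt_id t).pow 2 |>.const_sub 1)
      refine this.congr_deriv (Eq.symm ?_)
      simp only [id_eq]
      field_simp; ring
    have hu : HasDerivAt (fun t : ℝ => (r + p*t)/(p + r*t))
        ((p^2 - r^2)/(p + r*t)^2) t := by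
      have := ((hasDerivAt_id t).const_mul p |>.const_add r).div
        ((hasDerivAt_id t).const_mul r |>.const_add p) hd.ne'
      refine this.congr_deriv (Eq.symm ?_)
      simp only [id_eq]
      field_simp; ring
    have hult : (r + p*t)/(p + r*t) < 1 := by
      rw [div_lt_one hd]; nlinarith
    have hugt : -1 < (r + p*t)/(p + r*t) := by
      rw [lt_div_iff₀ hd]; nlinarith
    have husq : 1 - ((r + p*t)/(p + r*t))^2 = (q * Real.sqrt (1-t^2) / (p + r*t))^2 := by
      field_simp
      nlinarith [hq2, hs1]
    have h3 : HasDerivAt (fun t : ℝ => Real.arcsin ((r + p*t)/(p + r*t)))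
        (q / ((p + r*t) * Real.sqrt (1 - t^2))) t := by
      have := (Real.hasDerivAt_arcsin hugt.ne' hult.ne).comp t hu
      refine this.congr_deriv (Eq.symm ?_)
      rw [husq, Real.sqrt_sq (by positivity)]
      rw [show (p:ℝ)^2 - r^2 = q^2 from hq2.symm]
      field_simp
    have hH : HasDerivAt H
        ((p * (1 / Real.sqrt (1 - t^2)) + r * (-t / Real.sqrt (1 - t^2))
          - q * (q / ((p + r*t) * Real.sqrt (1 - t^2)))) / r^2) t := by
      exact (((h1.const_mul p).add (h2.const_mul r)).sub (h3.const_mul q)).div_const _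
    convert hH using 1
    rw [eq_div_iff (by positivity : (r:ℝ)^2 ≠ 0)]
    field_simp
    rw [hs1, hq2, eq_sub_iff_add_eq, ← add_div, div_eq_iff (by rw [mul_comm t r]; exact hd.ne')]
    ring
  have hint : IntervalIntegrable (fun t => Real.sqrt (1 - t^2) / (p + r*t))
      volume (-1) 1 := by
    apply ContinuousOn.intervalIntegrable
    rw [uIcc_of_le (by norm_num)]
    exact ContinuousOn.div (by fun_prop) (by fun_prop) (fun t ht => (hden t ht).ne')
  rw [integral_eq_sub_of_hasDeriv_right_of_le (by norm_num) hcont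
      (fun x hx => (hderiv x hx).hasDerivWithinAt) hint]
  have e1 : (r + p*1)/(p + r*1) = 1 := by
    rw [div_eq_one_iff_eq (by nlinarith)]; ring
  have e2 : (r + p*(-1))/(p + r*(-1)) = -1 := by
    rw [div_eq_iff (by nlinarith)]; ring
  have He1 : H 1 = (p * (Real.pi/2) - q * (Real.pi/2)) / r^2 := by
    simp only [hHdef]
    rw [e1, Real.arcsin_one, show (1:ℝ) - 1^2 = 0 by norm_num, Real.sqrt_zero]
    ring
  have He2 : H (-1) = (p * (-(Real.pi/2)) - q * (-(Real.pi/2))) / r^2 := by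
    simp only [hHdef]
    rw [e2, Real.arcsin_neg_one, show (1:ℝ) - (-1:ℝ)^2 = 0 by norm_num, Real.sqrt_zero]
    ring
  rw [He1, He2]; ring

lemma mp_resolvent_int (Nb c : ℝ) (hNb0 : 0 < Nb) (hc : 0 < c) :
    ∫ lam in ((1 - Real.sqrt Nb)^2)..((1 + Real.sqrt Nb)^2),
        Real.sqrt ((lam - (1 - Real.sqrt Nb)^2) * ((1 + Real.sqrt Nb)^2 - lam)) / (lam + c)
      = Real.pi * ((1 + Nb + c) - Real.sqrt ((1 + Nb + c)^2 - 4*Nb)) := by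
  have hsq : Real.sqrt Nb ^ 2 = Nb := Real.sq_sqrt hNb0.le
  have hsq0 : 0 < Real.sqrt Nb := Real.sqrt_pos.2 hNb0
  set r : ℝ := 2 * Real.sqrt Nb with hrdef
  set p : ℝ := 1 + Nb + c with hpdef
  have hr : 0 < r := by positivity
  have hpr : r < p := by nlinarith [sq_nonneg (1 - Real.sqrt Nb)]
  have ha : (1 - Real.sqrt Nb)^2 = r * (-1) + (1 + Nb) := by
    rw [hrdef]; nlinarith [hsq]
  have hb : (1 + Real.sqrt Nb)^2 = r * 1 + (1 + Nb) := by
    rw [hrdef]; nlinarith [hsq]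
  have hcomp := intervalIntegral.integral_comp_mul_add
    (a := (-1:ℝ)) (b := 1)
    (fun lam => Real.sqrt ((lam - (1 - Real.sqrt Nb)^2) * ((1 + Real.sqrt Nb)^2 - lam)) / (lam + c))
    hr.ne' (1 + Nb)
  rw [← ha, ← hb] at hcomp
  have hpt : ∀ t : ℝ,
      Real.sqrt ((r * t + (1 + Nb) - (1 - Real.sqrt Nb)^2) *
          ((1 + Real.sqrt Nb)^2 - (r * t + (1 + Nb)))) / (r * t + (1 + Nb) + c)
        = r * (Real.sqrt (1 - t^2) / (p + r * t)) := by
    intro t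
    have h1 : (r * t + (1 + Nb) - (1 - Real.sqrt Nb)^2) *
        ((1 + Real.sqrt Nb)^2 - (r * t + (1 + Nb))) = r^2 * (1 - t^2) := by
      simp only [hrdef]
      linear_combination (4*Real.sqrt Nb*t + Nb - Real.sqrt Nb^2) * hsq
    rw [h1, Real.sqrt_mul (sq_nonneg r), Real.sqrt_sq hr.le]
    rw [show r * t + (1 + Nb) + c = p + r * t by rw [hpdef]; ring]
    ring
  simp only [hpt] at hcomp
  rw [intervalIntegral.integral_const_mul] at hcomp
  have hval := sqrt_one_sub_sq_div_int p r hr hpr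
  have hr2 : p^2 - r^2 = (1 + Nb + c)^2 - 4 * Nb := by
    rw [hpdef, hrdef]; nlinarith [hsq]
  calc ∫ lam in ((1 - Real.sqrt Nb)^2)..((1 + Real.sqrt Nb)^2),
        Real.sqrt ((lam - (1 - Real.sqrt Nb)^2) * ((1 + Real.sqrt Nb)^2 - lam)) / (lam + c)
      = r * (r * ∫ t in (-1:ℝ)..1, Real.sqrt (1 - t^2) / (p + r * t)) := by
        rw [(inv_smul_eq_iff₀ hr.ne').1 hcomp.symm, smul_eq_mul]
    _ = r * (r * (Real.pi * (p - Real.sqrt (p^2 - r^2)) / r^2)) := by rw [hval]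
    _ = Real.pi * ((1 + Nb + c) - Real.sqrt ((1 + Nb + c)^2 - 4*Nb)) := by
        rw [hr2, hpdef]; field_simp


section facts
variable {Nb : ℝ} (hNb0 : 0 < Nb) (hNb1 : Nb ≤ 1)

lemma mp_a_nonneg : 0 ≤ (1 - Real.sqrt Nb)^2 := sq_nonneg _

lemma mp_a_le_b : (1 - Real.sqrt Nb)^2 ≤ (1 + Real.sqrt Nb)^2 := by
  nlinarith [Real.sqrt_nonneg Nb]

include hNb0 in
lemma mp_b_pos : 0 < (1 + Real.sqrt Nb)^2 := by positivity

lemma mpDensity_meas : Measurable (mpDensity Nb) := by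
  unfold mpDensity; fun_prop

include hNb0 in
lemma mpDensity_nonneg {lam : ℝ} (h : 0 ≤ lam) : 0 ≤ mpDensity Nb lam := by
  unfold mpDensity
  apply div_nonneg (Real.sqrt_nonneg _)
  positivity

include hNb0 in
lemma mpDensity_le {lam : ℝ}
    (h : lam ∈ Ioc ((1 - Real.sqrt Nb)^2) ((1 + Real.sqrt Nb)^2)) :
    mpDensity Nb lam ≤
      (Real.sqrt ((1 + Real.sqrt Nb)^2) / (2 * Real.pi * Nb)) * lam ^ (-(1:ℝ)/2) := by
  have hl0 : 0 < lam := lt_of_le_of_lt (sq_nonneg _) h.1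
  have h1 : (lam - (1 - Real.sqrt Nb)^2) * ((1 + Real.sqrt Nb)^2 - lam)
      ≤ lam * (1 + Real.sqrt Nb)^2 := by nlinarith [h.1.le, h.2, sq_nonneg (1 - Real.sqrt Nb)]
  have h2 : Real.sqrt ((lam - (1 - Real.sqrt Nb)^2) * ((1 + Real.sqrt Nb)^2 - lam))
      ≤ Real.sqrt lam * Real.sqrt ((1 + Real.sqrt Nb)^2) := by
    rw [← Real.sqrt_mul hl0.le]
    exact Real.sqrt_le_sqrt h1
  have hs0 : 0 < Real.sqrt lam := Real.sqrt_pos.2 hl0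
  have h3 : lam ^ (-(1:ℝ)/2) = (Real.sqrt lam)⁻¹ := by
    rw [Real.sqrt_eq_rpow, ← Real.rpow_neg hl0.le]; norm_num
  have h4 : (Real.sqrt lam)⁻¹ = Real.sqrt lam / lam := by
    rw [eq_div_iff hl0.ne', inv_mul_eq_div, div_eq_iff hs0.ne', Real.mul_self_sqrt hl0.le]
  calc mpDensity Nb lam
      = Real.sqrt ((lam - (1 - Real.sqrt Nb)^2) * ((1 + Real.sqrt Nb)^2 - lam))
          / (2 * Real.pi * lam * Nb) := rfl
    _ ≤ (Real.sqrt lam * Real.sqrt ((1 + Real.sqrt Nb)^2)) / (2 * Real.pi * lam * Nb) := by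
        have hD : (0:ℝ) < 2 * Real.pi * lam * Nb := by positivity
        exact div_le_div_of_nonneg_right h2 hD.le
    _ = (Real.sqrt ((1 + Real.sqrt Nb)^2) / (2 * Real.pi * Nb)) * (Real.sqrt lam / lam) := by
        field_simp
    _ = (Real.sqrt ((1 + Real.sqrt Nb)^2) / (2 * Real.pi * Nb)) * lam ^ (-(1:ℝ)/2) := by
        rw [h3, h4]

end facts

section intg
variable {Nb : ℝ} (hNb0 : 0 < Nb)

include hNb0 in
lemma mp_mul_intervalIntegrable (h : ℝ → ℝ) (hm : Measurable h) (K : ℝ)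
    (hbd : ∀ lam ∈ Ioc ((1 - Real.sqrt Nb)^2) ((1 + Real.sqrt Nb)^2), |h lam| ≤ K) :
    IntervalIntegrable (fun lam => h lam * mpDensity Nb lam) volume
      ((1 - Real.sqrt Nb)^2) ((1 + Real.sqrt Nb)^2) := by
  set a := (1 - Real.sqrt Nb)^2 with hadef
  set b := (1 + Real.sqrt Nb)^2 with hbdef
  have hab : a ≤ b := mp_a_le_b
  set C := Real.sqrt b / (2 * Real.pi * Nb) with hCdef
  have hC0 : 0 ≤ C := by rw [hCdef]; positivity
  have hint : IntervalIntegrable (fun lam : ℝ => (|K| * C) * lam ^ (-(1:ℝ)/2))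
      volume a b := by
    exact (intervalIntegrable_rpow' (by norm_num)).const_mul _
  apply hint.mono_fun ((hm.mul (mpDensity_meas)).aestronglyMeasurable)
  rw [EventuallyLE, ae_restrict_iff' measurableSet_uIoc]
  apply ae_of_all
  intro t ht
  rw [uIoc_of_le hab] at ht
  have ht0 : 0 < t := lt_of_le_of_lt (sq_nonneg _) ht.1
  have hg0 : 0 ≤ mpDensity Nb t := mpDensity_nonneg hNb0 ht0.le
  have hKabs : |h t| ≤ |K| := (hbd t ht).trans (le_abs_self K)
  calc ‖h t * mpDensity Nb t‖ = |h t| * mpDensity Nb t := by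
        rw [norm_mul, Real.norm_eq_abs, Real.norm_eq_abs, abs_of_nonneg hg0]
    _ ≤ |K| * (C * t ^ (-(1:ℝ)/2)) := by
        apply mul_le_mul hKabs (mpDensity_le hNb0 ht) hg0 (abs_nonneg K)
    _ ≤ ‖|K| * C * t ^ (-(1:ℝ)/2)‖ := by rw [mul_assoc]; exact le_abs_self _

include hNb0 in
lemma mpDensity_intervalIntegrable :
    IntervalIntegrable (mpDensity Nb) volume
      ((1 - Real.sqrt Nb)^2) ((1 + Real.sqrt Nb)^2) := by
  have := mp_mul_intervalIntegrable hNb0 (fun _ => 1) measurable_const 1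
    (by intro lam _; simp)
  simpa using this

include hNb0 in
lemma mp_log_intervalIntegrable {ρ : ℝ} (hρ : 0 < ρ) :
    IntervalIntegrable (fun lam => Real.log (1 + ρ * lam) * mpDensity Nb lam) volume
      ((1 - Real.sqrt Nb)^2) ((1 + Real.sqrt Nb)^2) := by
  apply mp_mul_intervalIntegrable hNb0 _ (Real.measurable_log.comp (by fun_prop))
    (Real.log (1 + ρ * (1 + Real.sqrt Nb)^2))
  intro lam hl
  have hl0 : 0 < lam := lt_of_le_of_lt (sq_nonneg _) hl.1
  have h1 : (1:ℝ) ≤ 1 + ρ * lam := by nlinarith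
  show |Real.log (1 + ρ * lam)| ≤ _
  rw [abs_of_nonneg (Real.log_nonneg h1)]
  apply Real.log_le_log (by linarith)
  nlinarith [hl.2]

end intg

lemma FMP_hasDerivAt {Nb ρ : ℝ} (hNb0 : 0 < Nb) (hρ : 0 < ρ) :
    HasDerivAt (FMP Nb)
      (((1 + Nb + 1/ρ) - Real.sqrt ((1 + Nb + 1/ρ)^2 - 4*Nb)) / (2 * Nb * ρ)) ρ := by
  set a := (1 - Real.sqrt Nb)^2 with hadef
  set b := (1 + Real.sqrt Nb)^2 with hbdef
  have hab : a ≤ b := mp_a_le_b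
  have hder := intervalIntegral.hasDerivAt_integral_of_dominated_loc_of_deriv_le
    (F := fun x lam => Real.log (1 + x * lam) * mpDensity Nb lam)
    (F' := fun x lam => (lam / (1 + x * lam)) * mpDensity Nb lam)
    (x₀ := ρ) (s := Metric.ball ρ (ρ/2)) (a := a) (b := b) (μ := volume)
    (bound := fun lam => (2/ρ) * mpDensity Nb lam)
    (Metric.ball_mem_nhds ρ (by positivity))
    (Eventually.of_forall fun x =>
      ((Real.measurable_log.comp (by fun_prop)).mul (mpDensity_meas)).aestronglyMeasurable)
    (mp_log_intervalIntegrable hNb0 hρ)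
    (((measurable_id.div (by fun_prop)).mul (mpDensity_meas)).aestronglyMeasurable)
    ?_ ((mpDensity_intervalIntegrable hNb0).const_mul _) ?_
  · have hFeq : (fun x => ∫ lam in a..b, Real.log (1 + x * lam) * mpDensity Nb lam)
        = FMP Nb := rfl
    rw [hFeq] at hder
    have hval : (∫ lam in a..b, (lam / (1 + ρ * lam)) * mpDensity Nb lam)
        = ((1 + Nb + 1/ρ) - Real.sqrt ((1 + Nb + 1/ρ)^2 - 4*Nb)) / (2 * Nb * ρ) := by
      have hcongr : EqOn (fun lam => (lam / (1 + ρ * lam)) * mpDensity Nb lam)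
          (fun lam => (1/(2*Real.pi*Nb*ρ)) *
            (Real.sqrt ((lam - a) * (b - lam)) / (lam + 1/ρ))) (uIcc a b) := by
        intro t ht
        rw [uIcc_of_le hab] at ht
        rcases eq_or_lt_of_le (le_trans (sq_nonneg _) ht.1) with h0 | h0
        · have ha0 : a = 0 := le_antisymm (h0 ▸ ht.1) (sq_nonneg _)
          simp only [← h0, ha0, mpDensity, sub_zero, zero_div, zero_mul, mul_zero,
            zero_sub]
          simp
        · have hd1 : (0:ℝ) < 1 + ρ * t := by nlinarith
          have hd2 : (0:ℝ) < t + 1/ρ := by positivity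
          have key : ∀ X : ℝ, t / (1 + ρ*t) * (X / (2*Real.pi*t*Nb))
              = 1/(2*Real.pi*Nb*ρ) * (X / (t + 1/ρ)) := by
            intro X
            rw [div_mul_div_comm, div_mul_div_comm,
              div_eq_div_iff (by positivity) (by positivity)]
            field_simp
            ring
          simp only [mpDensity]
          exact key _
      rw [intervalIntegral.integral_congr hcongr, intervalIntegral.integral_const_mul,
        mp_resolvent_int Nb (1/ρ) hNb0 (by positivity)]
      field_simp
    rw [hval] at hder
    exact hder.2
  · apply ae_of_all
    intro t ht x hx
    rw [uIoc_of_le hab] at ht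
    have ht0 : 0 < t := lt_of_le_of_lt (sq_nonneg _) ht.1
    have hx0 : ρ/2 < x := by
      have := abs_lt.1 (by simpa [Real.dist_eq] using Metric.mem_ball.1 hx)
      linarith [this.1]
    have hd1 : (0:ℝ) < 1 + x * t := by nlinarith
    have hg0 : 0 ≤ mpDensity Nb t := mpDensity_nonneg hNb0 ht0.le
    rw [norm_mul, Real.norm_eq_abs, Real.norm_eq_abs,
      abs_of_nonneg hg0, abs_of_nonneg (by positivity : (0:ℝ) ≤ t / (1 + x * t))]
    apply mul_le_mul_of_nonneg_right ?_ hg0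
    rw [div_le_div_iff₀ hd1 hρ]
    nlinarith
  · apply ae_of_all
    intro t ht x hx
    rw [uIoc_of_le hab] at ht
    have ht0 : 0 < t := lt_of_le_of_lt (sq_nonneg _) ht.1
    have hx0 : ρ/2 < x := by
      have := abs_lt.1 (by simpa [Real.dist_eq] using Metric.mem_ball.1 hx)
      linarith [this.1]
    have hd1 : (0:ℝ) < 1 + x * t := by nlinarith
    have h0 : HasDerivAt (fun x : ℝ => 1 + x * t) t x := by
      simpa using ((hasDerivAt_id x).mul_const t).const_add 1
    exact (h0.log hd1.ne').mul_const _


lemma alg (Nb u W s : ℝ) (hNb : Nb ≠ 0) (hs : s ≠ 0)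
    (h1z : 1 - (W - s)/2 ≠ 0) (hWu : W = 1 + Nb + u) (hd2 : s^2 = W^2 - 4*Nb) :
    (W - s) * u / (2*Nb)
      = (u - u^2/s)
        + ((1 - Nb)/Nb) * (((W - s)/2 * u^2 / s) / (1 - (W - s)/2))
        - ((W - s)/2 * u^2 / s) / Nb := by
  have h2z : (2:ℝ) - W + s ≠ 0 := fun h => h1z (by rw [show (1:ℝ) - (W-s)/2 = (2-W+s)/2 by ring, h]; norm_num)
  rw [show (1:ℝ) - (W-s)/2 = (2-W+s)/2 by ring]
  field_simp
  subst hWu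
  linear_combination (u^2 - s*u) * hd2


noncomputable def RMP (Nb ρ : ℝ) : ℝ :=
  Real.log (ρ * ((1 + Nb + 1 / ρ + Real.sqrt ((1 + Nb + 1 / ρ) ^ 2 - 4 * Nb)) / 2))
    + ((1 - Nb) / Nb) * Real.log (1 /
        (1 - (1 + Nb + 1 / ρ - Real.sqrt ((1 + Nb + 1 / ρ) ^ 2 - 4 * Nb)) / 2))
    - ((1 + Nb + 1 / ρ - Real.sqrt ((1 + Nb + 1 / ρ) ^ 2 - 4 * Nb)) / 2) / Nb

section Rfacts
variable {Nb ρ : ℝ} (hNb0 : 0 < Nb) (hNb1 : Nb ≤ 1) (hρ : 0 < ρ)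

include hNb0 hρ in
lemma mp_disc_pos : 0 < (1 + Nb + 1/ρ)^2 - 4*Nb := by
  have h1 : 2*Real.sqrt Nb < 1 + Nb + 1/ρ := by
    nlinarith [sq_nonneg (1 - Real.sqrt Nb), Real.sq_sqrt hNb0.le, one_div_pos.2 hρ]
  nlinarith [Real.sqrt_nonneg Nb, Real.sq_sqrt hNb0.le]

include hNb0 hρ in
lemma mp_s_lt_w : Real.sqrt ((1 + Nb + 1/ρ)^2 - 4*Nb) < 1 + Nb + 1/ρ := by
  have h2 := Real.sq_sqrt (mp_disc_pos hNb0 hρ).le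
  have h3 := Real.sqrt_nonneg ((1 + Nb + 1/ρ)^2 - 4*Nb)
  nlinarith [one_div_pos.2 hρ]

include hNb0 hNb1 hρ in
lemma mp_z_lt_one : (1 + Nb + 1/ρ - Real.sqrt ((1 + Nb + 1/ρ)^2 - 4*Nb))/2 < 1 := by
  have h2 := Real.sq_sqrt (mp_disc_pos hNb0 hρ).le
  have h3 := Real.sqrt_nonneg ((1 + Nb + 1/ρ)^2 - 4*Nb)
  have h4 : 0 < 1/ρ := one_div_pos.2 hρ
  nlinarith [sq_nonneg (Real.sqrt ((1 + Nb + 1/ρ)^2 - 4*Nb) - (1 + Nb + 1/ρ - 2))]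

include hNb0 hNb1 hρ in
lemma RMP_hasDerivAt :
    HasDerivAt (RMP Nb)
      (((1 + Nb + 1/ρ) - Real.sqrt ((1 + Nb + 1/ρ)^2 - 4*Nb)) / (2 * Nb * ρ)) ρ := by
  have hd2 := Real.sq_sqrt (mp_disc_pos hNb0 hρ).le
  set s := Real.sqrt ((1 + Nb + 1/ρ)^2 - 4*Nb) with hsdef
  have hs0 : 0 < s := Real.sqrt_pos.2 (mp_disc_pos hNb0 hρ)
  have hsw : s < 1 + Nb + 1/ρ := mp_s_lt_w hNb0 hρ
  have hz1 : (1 + Nb + 1/ρ - s)/2 < 1 := mp_z_lt_one hNb0 hNb1 hρ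
  have hw' : HasDerivAt (fun x : ℝ => 1 + Nb + 1/x) (-(1/ρ^2)) ρ := by
    simpa [one_div] using (hasDerivAt_inv hρ.ne').const_add (1 + Nb)
  have hs' : HasDerivAt (fun x : ℝ => Real.sqrt ((1 + Nb + 1/x)^2 - 4*Nb))
      ((1 / (2 * s)) * (2 * (1 + Nb + 1/ρ)^1 * (-(1/ρ^2)))) ρ := by
    have hinner : HasDerivAt (fun x : ℝ => (1 + Nb + 1/x)^2 - 4*Nb)
        (2 * (1 + Nb + 1/ρ)^1 * (-(1/ρ^2))) ρ := by
      exact_mod_cast (hw'.pow 2).sub_const (4*Nb)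
    exact (Real.hasDerivAt_sqrt (mp_disc_pos hNb0 hρ).ne').comp ρ hinner
  have hyf : HasDerivAt (fun x : ℝ => x * ((1 + Nb + 1/x + Real.sqrt ((1 + Nb + 1/x)^2 - 4*Nb))/2))
      (1 * ((1 + Nb + 1/ρ + s)/2) + ρ * ((-(1/ρ^2) + (1 / (2 * s)) * (2 * (1 + Nb + 1/ρ)^1 * (-(1/ρ^2))))/2)) ρ :=
    (hasDerivAt_id ρ).mul ((hw'.add hs').div_const 2)
  have hy0 : ρ * ((1 + Nb + 1/ρ + s)/2) ≠ 0 := by positivity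
  have t1 := hyf.log hy0
  have hzf : HasDerivAt (fun x : ℝ => (1 + Nb + 1/x - Real.sqrt ((1 + Nb + 1/x)^2 - 4*Nb))/2)
      ((-(1/ρ^2) - (1 / (2 * s)) * (2 * (1 + Nb + 1/ρ)^1 * (-(1/ρ^2))))/2) ρ :=
    (hw'.sub hs').div_const 2
  have h1mz : (0:ℝ) < 1 - (1 + Nb + 1/ρ - s)/2 := by linarith
  have hinv : HasDerivAt (fun x : ℝ => 1 / (1 - (1 + Nb + 1/x - Real.sqrt ((1 + Nb + 1/x)^2 - 4*Nb))/2))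
      ((0 * (1 - (1 + Nb + 1/ρ - s)/2) - 1 * (-((-(1/ρ^2) - (1 / (2 * s)) * (2 * (1 + Nb + 1/ρ)^1 * (-(1/ρ^2))))/2)))
        / (1 - (1 + Nb + 1/ρ - s)/2)^2) ρ :=
    (hasDerivAt_const ρ (1:ℝ)).div (hzf.const_sub 1) h1mz.ne'
  have hinv0 : 1 / (1 - (1 + Nb + 1/ρ - s)/2) ≠ 0 := by positivity
  have t2 := (hinv.log hinv0).const_mul ((1 - Nb)/Nb)
  have t3 := hzf.div_const Nb
  have total := (t1.add t2).sub t3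
  have : RMP Nb = fun x : ℝ =>
      Real.log (x * ((1 + Nb + 1/x + Real.sqrt ((1 + Nb + 1/x)^2 - 4*Nb))/2))
      + ((1 - Nb)/Nb) * Real.log (1 / (1 - (1 + Nb + 1/x - Real.sqrt ((1 + Nb + 1/x)^2 - 4*Nb))/2))
      - (1 + Nb + 1/x - Real.sqrt ((1 + Nb + 1/x)^2 - 4*Nb))/2 / Nb := by
    funext x; rw [RMP]
  rw [this]
  refine total.congr_deriv (Eq.symm ?_)
  have gen : ∀ v Z : ℝ, v ≠ 0 → (0*v - 1*(-Z))/v^2/(1/v) = Z/v := by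
    intro v Z hv; field_simp; ring
  rw [gen _ _ h1mz.ne']
  have eZ : ((-(1/ρ^2) - (1 / (2 * s)) * (2 * (1 + Nb + 1/ρ)^1 * (-(1/ρ^2))))/2)
      = (1 + Nb + 1/ρ - s)/2 * (1/ρ)^2 / s := by
    field_simp
    ring
  have eT1 : (1 * ((1 + Nb + 1/ρ + s)/2)
        + ρ * ((-(1/ρ^2) + (1 / (2 * s)) * (2 * (1 + Nb + 1/ρ)^1 * (-(1/ρ^2))))/2))
        / (ρ * ((1 + Nb + 1/ρ + s)/2))
      = 1/ρ - (1/ρ)^2/s := by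
    rw [div_eq_iff hy0]
    field_simp
    ring
  have eA : (1 + Nb + 1/ρ - s) / (2 * Nb * ρ)
      = (1 + Nb + 1/ρ - s) * (1/ρ) / (2*Nb) := by
    rw [mul_one_div, div_div, mul_comm ρ (2*Nb)]
  simp only [eZ]
  rw [eT1, eA]
  exact alg Nb (1/ρ) (1 + Nb + 1/ρ) s hNb0.ne' hs0.ne' h1mz.ne' rfl hd2

end Rfacts


section lims
variable {Nb : ℝ} (hNb0 : 0 < Nb)

include hNb0 in
lemma zMP_tendsto :
    Tendsto (fun ρ => (1 + Nb + 1/ρ - Real.sqrt ((1 + Nb + 1/ρ)^2 - 4*Nb))/2)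
      (nhdsWithin 0 (Ioi 0)) (nhds 0) := by
  have hw : Tendsto (fun ρ : ℝ => 1 + Nb + 1/ρ) (nhdsWithin 0 (Ioi 0)) atTop := by
    have h1 : Tendsto (fun ρ : ℝ => 1/ρ) (nhdsWithin 0 (Ioi 0)) atTop := by
      simpa [one_div] using tendsto_inv_nhdsGT_zero
    simpa [add_assoc] using tendsto_atTop_add_const_left _ (1 + Nb) h1
  have hws : Tendsto (fun ρ : ℝ => 1 + Nb + 1/ρ + Real.sqrt ((1 + Nb + 1/ρ)^2 - 4*Nb))
      (nhdsWithin 0 (Ioi 0)) atTop :=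
    tendsto_atTop_mono (fun ρ => le_add_of_nonneg_right (Real.sqrt_nonneg _)) hw
  have h0 : Tendsto (fun ρ : ℝ => (2*Nb) / (1 + Nb + 1/ρ + Real.sqrt ((1 + Nb + 1/ρ)^2 - 4*Nb)))
      (nhdsWithin 0 (Ioi 0)) (nhds 0) := tendsto_const_nhds.div_atTop hws
  apply h0.congr'
  filter_upwards [eventually_nhdsWithin_of_forall (fun ρ (hρ : ρ ∈ Ioi 0) => hρ)] with ρ hρ
  have hρ' : (0:ℝ) < ρ := hρ
  have hd := Real.sq_sqrt (mp_disc_pos hNb0 hρ').le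
  have hs0 := Real.sqrt_nonneg ((1 + Nb + 1/ρ)^2 - 4*Nb)
  have hwpos : (0:ℝ) < 1 + Nb + 1/ρ := by positivity
  rw [div_eq_div_iff (by positivity) (two_ne_zero)]
  linear_combination hd

include hNb0 in
lemma RMP_tendsto : Tendsto (RMP Nb) (nhdsWithin 0 (Ioi 0)) (nhds 0) := by
  have hz := zMP_tendsto hNb0
  have hρy : Tendsto (fun ρ : ℝ => ρ * ((1 + Nb + 1/ρ + Real.sqrt ((1 + Nb + 1/ρ)^2 - 4*Nb))/2))
      (nhdsWithin 0 (Ioi 0)) (nhds 1) := by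
    have hcont : Tendsto (fun ρ : ℝ =>
        ((ρ*(1+Nb)+1) + Real.sqrt ((ρ*(1+Nb)+1)^2 - 4*Nb*ρ^2))/2) (nhds 0) (nhds 1) := by
      have hc : Continuous (fun ρ : ℝ =>
          ((ρ*(1+Nb)+1) + Real.sqrt ((ρ*(1+Nb)+1)^2 - 4*Nb*ρ^2))/2) := by
        apply Continuous.div_const
        apply Continuous.add (by fun_prop)
        exact (Real.continuous_sqrt.comp (by fun_prop))
      have := hc.tendsto 0
      simpa [Real.sqrt_one] using this
    apply (hcont.mono_left nhdsWithin_le_nhds).congr'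
    filter_upwards [eventually_nhdsWithin_of_forall (fun ρ (hρ : ρ ∈ Ioi 0) => hρ)] with ρ hρ
    have hρ0 : (ρ:ℝ) ≠ 0 := ne_of_gt hρ
    have h1 : ρ * (1 + Nb + 1/ρ) = ρ*(1+Nb)+1 := by field_simp
    have h2 : ρ * Real.sqrt ((1 + Nb + 1/ρ)^2 - 4*Nb)
        = Real.sqrt ((ρ*(1+Nb)+1)^2 - 4*Nb*ρ^2) := by
      rw [show (ρ*(1+Nb)+1)^2 - 4*Nb*ρ^2 = ρ^2 * ((1 + Nb + 1/ρ)^2 - 4*Nb) by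
        field_simp]
      rw [Real.sqrt_mul (sq_nonneg ρ), Real.sqrt_sq (le_of_lt hρ)]
    rw [eq_comm, show ρ * ((1 + Nb + 1/ρ + Real.sqrt ((1 + Nb + 1/ρ)^2 - 4*Nb))/2)
      = (ρ * (1 + Nb + 1/ρ) + ρ * Real.sqrt ((1 + Nb + 1/ρ)^2 - 4*Nb))/2 from by ring, h1, h2]
  have t1 : Tendsto (fun ρ : ℝ =>
      Real.log (ρ * ((1 + Nb + 1/ρ + Real.sqrt ((1 + Nb + 1/ρ)^2 - 4*Nb))/2)))
      (nhdsWithin 0 (Ioi 0)) (nhds 0) := by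
    have := (Real.continuousAt_log one_ne_zero).tendsto.comp hρy
    simpa [Function.comp_def] using this
  have t2 : Tendsto (fun ρ : ℝ => ((1-Nb)/Nb) *
      Real.log (1/(1 - (1 + Nb + 1/ρ - Real.sqrt ((1 + Nb + 1/ρ)^2 - 4*Nb))/2)))
      (nhdsWithin 0 (Ioi 0)) (nhds 0) := by
    have hinner : Tendsto (fun ρ : ℝ =>
        1/(1 - (1 + Nb + 1/ρ - Real.sqrt ((1 + Nb + 1/ρ)^2 - 4*Nb))/2))
        (nhdsWithin 0 (Ioi 0)) (nhds 1) := by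
      have h1 : Tendsto (fun ρ : ℝ =>
          1 - (1 + Nb + 1/ρ - Real.sqrt ((1 + Nb + 1/ρ)^2 - 4*Nb))/2)
          (nhdsWithin 0 (Ioi 0)) (nhds 1) := by
        simpa using tendsto_const_nhds.sub hz
      simpa using h1.inv₀ one_ne_zero
    have := (Real.continuousAt_log one_ne_zero).tendsto.comp hinner
    simp only [Real.log_one] at this
    simpa using this.const_mul ((1-Nb)/Nb)
  have t3 : Tendsto (fun ρ : ℝ =>
      ((1 + Nb + 1/ρ - Real.sqrt ((1 + Nb + 1/ρ)^2 - 4*Nb))/2)/Nb)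
      (nhdsWithin 0 (Ioi 0)) (nhds 0) := by
    simpa using hz.div_const Nb
  have total := (t1.add t2).sub t3
  rw [show (0:ℝ) + 0 - 0 = 0 by norm_num] at total
  exact total

include hNb0 in
lemma FMP_tendsto : Tendsto (FMP Nb) (nhdsWithin 0 (Ioi 0)) (nhds 0) := by
  set a := (1 - Real.sqrt Nb)^2 with hadef
  set b := (1 + Real.sqrt Nb)^2 with hbdef
  have hab : a ≤ b := mp_a_le_b
  set M := ∫ lam in a..b, mpDensity Nb lam with hMdef
  apply squeeze_zero' (f := FMP Nb)
      (g := fun ρ => Real.log (1 + ρ * b) * M)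
  · filter_upwards [eventually_nhdsWithin_of_forall (fun ρ (hρ : ρ ∈ Ioi 0) => hρ)] with ρ hρ
    apply intervalIntegral.integral_nonneg hab
    intro u hu
    have hu0 : (0:ℝ) ≤ u := le_trans (sq_nonneg _) hu.1
    exact mul_nonneg (Real.log_nonneg (by nlinarith [mem_Ioi.1 hρ])) (mpDensity_nonneg hNb0 hu0)
  · filter_upwards [eventually_nhdsWithin_of_forall (fun ρ (hρ : ρ ∈ Ioi 0) => hρ)] with ρ hρ
    have hρ0 : (0:ℝ) < ρ := hρ
    have hb0 : (0:ℝ) ≤ b := le_trans (sq_nonneg _) hab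
    calc FMP Nb ρ ≤ ∫ lam in a..b, Real.log (1 + ρ * b) * mpDensity Nb lam := by
          apply intervalIntegral.integral_mono_on hab
            (mp_log_intervalIntegrable hNb0 hρ0)
            ((mpDensity_intervalIntegrable hNb0).const_mul _)
          intro u hu
          have hu0 : (0:ℝ) ≤ u := le_trans (sq_nonneg _) hu.1
          apply mul_le_mul_of_nonneg_right ?_ (mpDensity_nonneg hNb0 hu0)
          apply Real.log_le_log (by nlinarith)
          nlinarith [hu.2]
      _ = Real.log (1 + ρ * b) * M := by
          rw [hMdef, intervalIntegral.integral_const_mul]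
  · have hc : Tendsto (fun ρ : ℝ => 1 + ρ * b) (nhds 0) (nhds 1) := by
      have : Continuous (fun ρ : ℝ => 1 + ρ * b) := by fun_prop
      simpa using this.tendsto 0
    have hlog : Tendsto (fun ρ : ℝ => Real.log (1 + ρ * b)) (nhdsWithin 0 (Ioi 0)) (nhds 0) := by
      have := (Real.continuousAt_log one_ne_zero).tendsto.comp
        (hc.mono_left (nhdsWithin_le_nhds : nhdsWithin (0:ℝ) (Ioi 0) ≤ nhds 0))
      simpa [Function.comp_def] using this
    simpa using hlog.mul_const M

end lims

/-- Let `0 < N̄ ≤ 1`.  For every `ρ > 0`,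
`∫_a^b log(1 + ρλ) g(λ) dλ = log(ρ y) + ((1 − N̄)/N̄) log(1/(1 − z)) − z/N̄`, where
`y = (1/2)(1 + N̄ + 1/ρ + √((1 + N̄ + 1/ρ)² − 4N̄))` and
`z = (1/2)(1 + N̄ + 1/ρ − √((1 + N̄ + 1/ρ)² − 4N̄))`. -/
theorem stmt_15 (Nb ρ : ℝ) (hNb0 : 0 < Nb) (hNb1 : Nb ≤ 1) (hρ : 0 < ρ) :
    (∫ lam in Set.Icc ((1 - Real.sqrt Nb) ^ 2) ((1 + Real.sqrt Nb) ^ 2),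
        Real.log (1 + ρ * lam) * mpDensity Nb lam)
      = Real.log (ρ *
          ((1 + Nb + 1 / ρ + Real.sqrt ((1 + Nb + 1 / ρ) ^ 2 - 4 * Nb)) / 2))
        + ((1 - Nb) / Nb) * Real.log (1 /
            (1 - (1 + Nb + 1 / ρ - Real.sqrt ((1 + Nb + 1 / ρ) ^ 2 - 4 * Nb)) / 2))
        - ((1 + Nb + 1 / ρ - Real.sqrt ((1 + Nb + 1 / ρ) ^ 2 - 4 * Nb)) / 2) / Nb := by
  have key : ∀ ρ₁ ∈ Ioo (0:ℝ) ρ, FMP Nb ρ - RMP Nb ρ = FMP Nb ρ₁ - RMP Nb ρ₁ := by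
    intro ρ₁ hρ₁
    have h01 : 0 < ρ₁ := hρ₁.1
    have h1ρ : ρ₁ ≤ ρ := hρ₁.2.le
    have hmain := eq_of_has_deriv_right_eq
      (f := FMP Nb) (g := fun x => RMP Nb x + (FMP Nb ρ₁ - RMP Nb ρ₁))
      (f' := fun x => ((1 + Nb + 1/x) - Real.sqrt ((1 + Nb + 1/x)^2 - 4*Nb)) / (2 * Nb * x))
      (a := ρ₁) (b := ρ)
      (fun x hx => (FMP_hasDerivAt hNb0 (lt_of_lt_of_le h01 hx.1)).hasDerivWithinAt)
      (fun x hx => (((RMP_hasDerivAt hNb0 hNb1 (lt_of_lt_of_le h01 hx.1)).add_const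
          (FMP Nb ρ₁ - RMP Nb ρ₁))).hasDerivWithinAt)
      (fun x hx => (FMP_hasDerivAt hNb0 (lt_of_lt_of_le h01 hx.1)).continuousAt.continuousWithinAt)
      (fun x hx => (((RMP_hasDerivAt hNb0 hNb1 (lt_of_lt_of_le h01 hx.1)).add_const
          (FMP Nb ρ₁ - RMP Nb ρ₁))).continuousAt.continuousWithinAt)
      (by ring)
    have h5 := hmain ρ ⟨h1ρ, le_refl ρ⟩
    linarith [h5]
  have hlim : Tendsto (fun ρ₁ => FMP Nb ρ₁ - RMP Nb ρ₁) (nhdsWithin 0 (Ioi 0)) (nhds 0) := by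
    simpa using (FMP_tendsto hNb0).sub (RMP_tendsto hNb0)
  have hconst : Tendsto (fun _ : ℝ => FMP Nb ρ - RMP Nb ρ) (nhdsWithin 0 (Ioi 0))
      (nhds (FMP Nb ρ - RMP Nb ρ)) := tendsto_const_nhds
  have hev : (fun ρ₁ => FMP Nb ρ₁ - RMP Nb ρ₁) =ᶠ[nhdsWithin 0 (Ioi 0)]
      (fun _ => FMP Nb ρ - RMP Nb ρ) := by
    filter_upwards [Ioo_mem_nhdsGT hρ]
      with ρ₁ hρ₁
    exact (key ρ₁ hρ₁).symm
  have h0 : FMP Nb ρ - RMP Nb ρ = 0 := tendsto_nhds_unique hconst (Tendsto.congr' hev hlim)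
  have hFR : FMP Nb ρ = RMP Nb ρ := by linarith
  have hIcc : (∫ lam in Set.Icc ((1 - Real.sqrt Nb) ^ 2) ((1 + Real.sqrt Nb) ^ 2),
      Real.log (1 + ρ * lam) * mpDensity Nb lam) = FMP Nb ρ := by
    rw [FMP, intervalIntegral.integral_of_le (mp_a_le_b),
      ← MeasureTheory.integral_Icc_eq_integral_Ioc]
  rw [hIcc, hFR, RMP]
end

section
/- Let 0 < N̄ ≤ 1 and K̄ > 0, set a = (1 − √N̄)² and b = (1 + √N̄)², let g(λ) = √((λ − a)(b − λ))/(2π λ N̄) on [a, b] be the Marchenko–Pastur density, and let η ∈ [a, b) satisfy ∫_η^b g(λ) dλ = min{1, K̄/N̄}. Then lim_{ρ → ∞} ( ∫_η^b log(1 + (ρ/K̄) λ) g(λ) dλ ) / ( ∫_a^b log(1 + ρ λ) g(λ) dλ ) = min{1, K̄/N̄}. -/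
open MeasureTheory ProbabilityTheory Filter Real Set
open scoped ENNReal NNReal Topology

/-- master integrability lemma -/
lemma mp_integrableOn_of_bound {B C l : ℝ} (hl : 0 ≤ l) (hB : 0 < B) {f : ℝ → ℝ}
    (hm : AEStronglyMeasurable f (volume.restrict (Set.Ioc l B)))
    (hb : ∀ x ∈ Set.Ioc l B, |f x| ≤ C * x ^ (-(3/4) : ℝ)) :
    MeasureTheory.IntegrableOn f (Set.Ioc l B) := by
  have h1 : MeasureTheory.IntegrableOn (fun x : ℝ => C * x ^ (-(3/4) : ℝ)) (Set.Ioc 0 B) := by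
    have := (intervalIntegral.intervalIntegrable_rpow' (a := 0) (b := B)
      (r := -(3/4)) (by norm_num)).const_mul C
    rwa [intervalIntegrable_iff_integrableOn_Ioc_of_le hB.le] at this
  have h2 : MeasureTheory.IntegrableOn (fun x : ℝ => C * x ^ (-(3/4) : ℝ)) (Set.Ioc l B) :=
    h1.mono_set (Set.Ioc_subset_Ioc hl le_rfl)
  refine h2.integrable.mono hm ?_
  rw [MeasureTheory.ae_restrict_iff' measurableSet_Ioc]
  filter_upwards with x hx
  calc ‖f x‖ = |f x| := rfl
    _ ≤ C * x ^ (-(3/4) : ℝ) := hb x hx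
    _ ≤ ‖C * x ^ (-(3/4) : ℝ)‖ := le_abs_self _
lemma mp_nonneg {Nb x : ℝ} (hNb : 0 < Nb) (hx : 0 < x) : 0 ≤ mpDensity Nb x := by
  have : (0:ℝ) < 2 * Real.pi * x * Nb := by positivity
  exact div_nonneg (Real.sqrt_nonneg _) this.le

lemma rpow_half_le {B x : ℝ} (hx : 0 < x) (hxB : x ≤ B) :
    x ^ (-(1/2) : ℝ) ≤ B ^ ((1:ℝ)/4) * x ^ (-(3/4) : ℝ) := by
  have hB : 0 < B := lt_of_lt_of_le hx hxB
  have h1 : x ^ (-(1/2) : ℝ) = x ^ ((1:ℝ)/4) * x ^ (-(3/4) : ℝ) := by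
    rw [← Real.rpow_add hx]; norm_num
  rw [h1]
  have : x ^ ((1:ℝ)/4) ≤ B ^ ((1:ℝ)/4) := Real.rpow_le_rpow hx.le hxB (by norm_num)
  exact mul_le_mul_of_nonneg_right this (Real.rpow_nonneg hx.le _)

lemma mp_le {Nb x : ℝ} (hNb : 0 < Nb) (hA : (1 - Real.sqrt Nb) ^ 2 ≤ x) (hx : 0 < x)
    (hxB : x ≤ (1 + Real.sqrt Nb) ^ 2) :
    mpDensity Nb x ≤ (Real.sqrt ((1 + Real.sqrt Nb) ^ 2) / (2 * Real.pi * Nb))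
      * x ^ (-(1/2) : ℝ) := by
  set B := (1 + Real.sqrt Nb) ^ 2 with hBdef
  have hB : 0 < B := lt_of_lt_of_le hx hxB
  have h1 : Real.sqrt ((x - (1 - Real.sqrt Nb) ^ 2) * (B - x)) ≤ Real.sqrt (x * B) := by
    apply Real.sqrt_le_sqrt
    have h2 : x - (1 - Real.sqrt Nb) ^ 2 ≤ x := sub_le_self _ (by positivity)
    exact mul_le_mul h2 (by linarith) (by linarith) hx.le
  have h3 : Real.sqrt (x * B) = Real.sqrt x * Real.sqrt B := Real.sqrt_mul hx.le _
  have hden : (0:ℝ) < 2 * Real.pi * x * Nb := by positivity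
  have step1 : mpDensity Nb x ≤ Real.sqrt (x * B) / (2 * Real.pi * x * Nb) := by
    unfold mpDensity; gcongr
  refine step1.trans (le_of_eq ?_)
  rw [h3, Real.sqrt_eq_rpow x, Real.rpow_neg hx.le]
  have hxne : x ^ ((1:ℝ)/2) ≠ 0 := by positivity
  field_simp
  have hxh : x ^ ((1:ℝ)/2) * x ^ ((1:ℝ)/2) = x := by
    rw [← Real.rpow_add hx]; norm_num
  rw [sq, hxh]
lemma abs_log_le {B x : ℝ} (hx : 0 < x) (hxB : x ≤ B) :
    |Real.log x| ≤ 4 * x ^ (-(1/4) : ℝ) + B := by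
  have hB : 0 < B := lt_of_lt_of_le hx hxB
  rcases le_or_gt x 1 with h | h
  · have h0 : |Real.log x| = Real.log x⁻¹ := by
      rw [Real.log_inv, abs_of_nonpos (Real.log_nonpos hx.le h)]
    have h1 : Real.log x⁻¹ = 4 * Real.log (x⁻¹ ^ ((1:ℝ)/4)) := by
      rw [Real.log_rpow (by positivity)]; ring
    have h2 : Real.log (x⁻¹ ^ ((1:ℝ)/4)) ≤ x⁻¹ ^ ((1:ℝ)/4) := by
      have := Real.log_le_sub_one_of_pos (x := x⁻¹ ^ ((1:ℝ)/4)) (by positivity)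
      linarith
    have h3 : x⁻¹ ^ ((1:ℝ)/4) = x ^ (-(1/4) : ℝ) := by
      rw [← Real.rpow_neg_one x, ← Real.rpow_mul hx.le]; norm_num
    rw [h0, h1]
    nlinarith [h2, h3, hB.le]
  · have h0 : |Real.log x| = Real.log x := abs_of_nonneg (Real.log_nonneg h.le)
    have h1 : Real.log x ≤ x - 1 := Real.log_le_sub_one_of_pos hx
    have h2 : (0:ℝ) ≤ 4 * x ^ (-(1/4) : ℝ) := by positivity
    rw [h0]; linarith
lemma mp_measurable (Nb : ℝ) : Measurable (mpDensity Nb) := by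
  unfold mpDensity
  fun_prop

lemma log_mul_mp_measurable (Nb c d : ℝ) :
    Measurable (fun x => Real.log (d + c * x) * mpDensity Nb x) := by
  exact (Real.measurable_log.comp (measurable_const.add (measurable_const.mul measurable_id))).mul
    (mp_measurable Nb)

lemma B_pos {Nb : ℝ} : (0:ℝ) < (1 + Real.sqrt Nb) ^ 2 := by
  have h : (0:ℝ) < 1 + Real.sqrt Nb := by
    have := Real.sqrt_nonneg Nb; linarith
  positivity

lemma mp_integrableOn {Nb l : ℝ} (hNb : 0 < Nb) (hl : (1 - Real.sqrt Nb) ^ 2 ≤ l) :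
    IntegrableOn (mpDensity Nb) (Set.Ioc l ((1 + Real.sqrt Nb) ^ 2)) := by
  set B := (1 + Real.sqrt Nb) ^ 2 with hBdef
  have hl0 : 0 ≤ l := le_trans (by positivity) hl
  refine mp_integrableOn_of_bound hl0 B_pos
    ((mp_measurable Nb).aestronglyMeasurable.restrict)
    (C := Real.sqrt B / (2 * Real.pi * Nb) * B ^ ((1:ℝ)/4)) ?_
  intro x hx
  have hx0 : 0 < x := lt_of_le_of_lt hl0 hx.1
  have hb1 := mp_le hNb (le_trans hl hx.1.le) hx0 hx.2
  have hb2 := rpow_half_le hx0 hx.2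
  have h0 : |mpDensity Nb x| = mpDensity Nb x := abs_of_nonneg (mp_nonneg hNb hx0)
  have hCB : (0:ℝ) ≤ Real.sqrt B / (2 * Real.pi * Nb) := by positivity
  rw [h0]
  calc mpDensity Nb x ≤ Real.sqrt B / (2 * Real.pi * Nb) * x ^ (-(1/2):ℝ) := hb1
    _ ≤ Real.sqrt B / (2 * Real.pi * Nb) * (B ^ ((1:ℝ)/4) * x ^ (-(3/4):ℝ)) :=
        mul_le_mul_of_nonneg_left hb2 hCB
    _ = Real.sqrt B / (2 * Real.pi * Nb) * B ^ ((1:ℝ)/4) * x ^ (-(3/4):ℝ) := by ring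

lemma logc_mp_integrableOn {Nb l c : ℝ} (hNb : 0 < Nb) (hc : 0 < c)
    (hl : (1 - Real.sqrt Nb) ^ 2 ≤ l) :
    IntegrableOn (fun x => Real.log (c * x) * mpDensity Nb x)
      (Set.Ioc l ((1 + Real.sqrt Nb) ^ 2)) := by
  set B := (1 + Real.sqrt Nb) ^ 2 with hBdef
  have hl0 : 0 ≤ l := le_trans (by positivity) hl
  have hm : Measurable (fun x => Real.log (c * x) * mpDensity Nb x) :=
    (Real.measurable_log.comp (measurable_const.mul measurable_id)).mul (mp_measurable Nb)
  refine mp_integrableOn_of_bound hl0 B_pos hm.aestronglyMeasurable.restrict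
    (C := (|Real.log c| + B) * (Real.sqrt B / (2 * Real.pi * Nb)) * B ^ ((1:ℝ)/4)
      + 4 * (Real.sqrt B / (2 * Real.pi * Nb))) ?_
  intro x hx
  have hx0 : 0 < x := lt_of_le_of_lt hl0 hx.1
  have hb1 := mp_le hNb (le_trans hl hx.1.le) hx0 hx.2
  have hb2 := rpow_half_le hx0 hx.2
  have hlog : |Real.log (c * x)| ≤ |Real.log c| + (4 * x ^ (-(1/4):ℝ) + B) := by
    rw [Real.log_mul hc.ne' hx0.ne']
    exact (abs_add_le _ _).trans (by gcongr; exact abs_log_le hx0 hx.2)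
  have hPQ : x ^ (-(1/4):ℝ) * x ^ (-(1/2):ℝ) = x ^ (-(3/4):ℝ) := by
    rw [← Real.rpow_add hx0]; norm_num
  have hmp0 : 0 ≤ mpDensity Nb x := mp_nonneg hNb hx0
  have hCB : (0:ℝ) ≤ Real.sqrt B / (2 * Real.pi * Nb) := by positivity
  have hP : (0:ℝ) ≤ x ^ (-(1/4):ℝ) := Real.rpow_nonneg hx0.le _
  have hQ : (0:ℝ) ≤ x ^ (-(1/2):ℝ) := Real.rpow_nonneg hx0.le _
  have hR : (0:ℝ) ≤ x ^ (-(3/4):ℝ) := Real.rpow_nonneg hx0.le _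
  have hK1 : (0:ℝ) ≤ B ^ ((1:ℝ)/4) := Real.rpow_nonneg B_pos.le _
  have habs : |Real.log (c * x) * mpDensity Nb x| = |Real.log (c * x)| * mpDensity Nb x := by
    rw [abs_mul, abs_of_nonneg hmp0]
  rw [habs]
  have step : |Real.log (c * x)| * mpDensity Nb x
      ≤ (|Real.log c| + (4 * x ^ (-(1/4):ℝ) + B))
        * (Real.sqrt B / (2 * Real.pi * Nb) * x ^ (-(1/2):ℝ)) := by
    apply mul_le_mul hlog hb1 hmp0
    positivity
  refine step.trans ?_
  have hB0 : (0:ℝ) ≤ B := B_pos.le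
  have hQK : x ^ (-(1/2):ℝ) ≤ B ^ ((1:ℝ)/4) * x ^ (-(3/4):ℝ) := hb2
  have hlogc : (0:ℝ) ≤ |Real.log c| := abs_nonneg _
  nlinarith [mul_le_mul_of_nonneg_left hQK (mul_nonneg (add_nonneg hlogc hB0) hCB),
    mul_le_mul_of_nonneg_left hQK hCB, hPQ,
    mul_nonneg (mul_nonneg hP hCB) hQ]

lemma log1c_mp_integrableOn {Nb l c : ℝ} (hNb : 0 < Nb) (hc : 0 < c)
    (hl : (1 - Real.sqrt Nb) ^ 2 ≤ l) :
    IntegrableOn (fun x => Real.log (1 + c * x) * mpDensity Nb x)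
      (Set.Ioc l ((1 + Real.sqrt Nb) ^ 2)) := by
  set B := (1 + Real.sqrt Nb) ^ 2 with hBdef
  have hl0 : 0 ≤ l := le_trans (by positivity) hl
  have hm : Measurable (fun x => Real.log (1 + c * x) * mpDensity Nb x) :=
    (Real.measurable_log.comp (measurable_const.add (measurable_const.mul measurable_id))).mul
      (mp_measurable Nb)
  refine mp_integrableOn_of_bound hl0 B_pos hm.aestronglyMeasurable.restrict
    (C := c * B * (Real.sqrt B / (2 * Real.pi * Nb)) * B ^ ((1:ℝ)/4)) ?_
  intro x hx
  have hx0 : 0 < x := lt_of_le_of_lt hl0 hx.1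
  have hb1 := mp_le hNb (le_trans hl hx.1.le) hx0 hx.2
  have hb2 := rpow_half_le hx0 hx.2
  have hmp0 : 0 ≤ mpDensity Nb x := mp_nonneg hNb hx0
  have hlog : |Real.log (1 + c * x)| ≤ c * B := by
    rw [abs_of_nonneg (Real.log_nonneg (by nlinarith))]
    have h1 : Real.log (1 + c * x) ≤ (1 + c * x) - 1 :=
      Real.log_le_sub_one_of_pos (by nlinarith)
    have h2 : c * x ≤ c * B := by nlinarith [hx.2]
    linarith
  have hCB : (0:ℝ) ≤ Real.sqrt B / (2 * Real.pi * Nb) := by positivity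
  have hQ : (0:ℝ) ≤ x ^ (-(1/2):ℝ) := Real.rpow_nonneg hx0.le _
  rw [abs_mul, abs_of_nonneg hmp0]
  calc |Real.log (1 + c * x)| * mpDensity Nb x
      ≤ (c * B) * (Real.sqrt B / (2 * Real.pi * Nb) * x ^ (-(1/2):ℝ)) := by
        apply mul_le_mul hlog hb1 hmp0 (by positivity)
    _ ≤ (c * B) * (Real.sqrt B / (2 * Real.pi * Nb) * (B ^ ((1:ℝ)/4) * x ^ (-(3/4):ℝ))) := by
        have : (0:ℝ) ≤ c * B := by positivity
        exact mul_le_mul_of_nonneg_left (mul_le_mul_of_nonneg_left hb2 hCB) this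
    _ = c * B * (Real.sqrt B / (2 * Real.pi * Nb)) * B ^ ((1:ℝ)/4) * x ^ (-(3/4):ℝ) := by ring

lemma aux_tendsto {F : ℝ → ℝ} {M L U : ℝ}
    (hL : ∀ ρ : ℝ, 2 ≤ ρ → M * Real.log ρ + L ≤ F ρ)
    (hU : ∀ ρ : ℝ, 2 ≤ ρ → F ρ ≤ M * Real.log ρ + U) :
    Tendsto (fun ρ => F ρ / Real.log ρ) atTop (𝓝 M) := by
  have hlog : Tendsto Real.log atTop atTop := Real.tendsto_log_atTop
  have h0 : ∀ c : ℝ, Tendsto (fun ρ => M + c / Real.log ρ) atTop (𝓝 M) := by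
    intro c
    have := (tendsto_const_nhds (x := c) (f := atTop (α := ℝ))).div_atTop hlog
    simpa using tendsto_const_nhds.add this
  apply tendsto_of_tendsto_of_tendsto_of_le_of_le' (h0 L) (h0 U)
  · filter_upwards [eventually_ge_atTop (2:ℝ)] with ρ hρ
    have hlρ : 0 < Real.log ρ := Real.log_pos (by linarith)
    calc M + L / Real.log ρ = (M * Real.log ρ + L) / Real.log ρ := by
          field_simp
      _ ≤ F ρ / Real.log ρ := by gcongr; exact hL ρ hρ
  · filter_upwards [eventually_ge_atTop (2:ℝ)] with ρ hρ
    have hlρ : 0 < Real.log ρ := Real.log_pos (by linarith)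
    calc F ρ / Real.log ρ ≤ (M * Real.log ρ + U) / Real.log ρ := by
          gcongr
          exact hU ρ hρ
      _ = M + U / Real.log ρ := by field_simp

lemma key_tendsto {Nb l c : ℝ} (hNb : 0 < Nb) (hc : 0 < c)
    (hl : (1 - Real.sqrt Nb) ^ 2 ≤ l) :
    Tendsto (fun ρ : ℝ =>
        (∫ x in Set.Ioc l ((1 + Real.sqrt Nb) ^ 2),
          Real.log (1 + c * ρ * x) * mpDensity Nb x) / Real.log ρ) atTop
      (𝓝 (∫ x in Set.Ioc l ((1 + Real.sqrt Nb) ^ 2), mpDensity Nb x)) := by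
  set B := (1 + Real.sqrt Nb) ^ 2 with hBdef
  set S := Set.Ioc l B with hSdef
  have hl0 : 0 ≤ l := le_trans (by positivity) hl
  have hint_mp := mp_integrableOn hNb hl
  have hint_L := logc_mp_integrableOn hNb hc hl
  have hint_U := log1c_mp_integrableOn hNb hc hl
  apply aux_tendsto (L := ∫ x in S, Real.log (c * x) * mpDensity Nb x)
    (U := ∫ x in S, Real.log (1 + c * x) * mpDensity Nb x)
  · intro ρ hρ
    have hρ0 : (0:ℝ) < ρ := by linarith
    have hint_ρ : IntegrableOn (fun x => Real.log (1 + c * ρ * x) * mpDensity Nb x) S :=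
      log1c_mp_integrableOn hNb (by positivity) hl
    have e1 : (∫ x in S, mpDensity Nb x) * Real.log ρ
        + (∫ x in S, Real.log (c * x) * mpDensity Nb x)
        = ∫ x in S, (Real.log ρ * mpDensity Nb x + Real.log (c * x) * mpDensity Nb x) := by
      rw [MeasureTheory.integral_add (hint_mp.const_mul _) hint_L,
        MeasureTheory.integral_const_mul]
      ring
    rw [e1]
    apply MeasureTheory.setIntegral_mono_on (hint_mp.const_mul _ |>.add hint_L) hint_ρ
      measurableSet_Ioc
    intro x hx
    have hx0 : 0 < x := lt_of_le_of_lt hl0 hx.1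
    have hlog : Real.log ρ + Real.log (c * x) ≤ Real.log (1 + c * ρ * x) := by
      have e2 : Real.log ρ + Real.log (c * x) = Real.log (ρ * (c * x)) :=
        (Real.log_mul hρ0.ne' (by positivity)).symm
      rw [e2]
      exact Real.log_le_log (by positivity) (by nlinarith)
    calc Real.log ρ * mpDensity Nb x + Real.log (c * x) * mpDensity Nb x
        = (Real.log ρ + Real.log (c * x)) * mpDensity Nb x := by ring
      _ ≤ Real.log (1 + c * ρ * x) * mpDensity Nb x :=
          mul_le_mul_of_nonneg_right hlog (mp_nonneg hNb hx0)
  · intro ρ hρ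
    have hρ0 : (0:ℝ) < ρ := by linarith
    have hint_ρ : IntegrableOn (fun x => Real.log (1 + c * ρ * x) * mpDensity Nb x) S :=
      log1c_mp_integrableOn hNb (by positivity) hl
    have e1 : (∫ x in S, mpDensity Nb x) * Real.log ρ
        + (∫ x in S, Real.log (1 + c * x) * mpDensity Nb x)
        = ∫ x in S, (Real.log ρ * mpDensity Nb x + Real.log (1 + c * x) * mpDensity Nb x) := by
      rw [MeasureTheory.integral_add (hint_mp.const_mul _) hint_U,
        MeasureTheory.integral_const_mul]
      ring
    rw [e1]
    apply MeasureTheory.setIntegral_mono_on hint_ρ (hint_mp.const_mul _ |>.add hint_U)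
      measurableSet_Ioc
    intro x hx
    have hx0 : 0 < x := lt_of_le_of_lt hl0 hx.1
    have hlog : Real.log (1 + c * ρ * x) ≤ Real.log ρ + Real.log (1 + c * x) := by
      have e2 : Real.log ρ + Real.log (1 + c * x) = Real.log (ρ * (1 + c * x)) :=
        (Real.log_mul hρ0.ne' (by positivity)).symm
      rw [e2]
      exact Real.log_le_log (by positivity) (by nlinarith)
    calc Real.log (1 + c * ρ * x) * mpDensity Nb x
        ≤ (Real.log ρ + Real.log (1 + c * x)) * mpDensity Nb x :=
          mul_le_mul_of_nonneg_right hlog (mp_nonneg hNb hx0)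
      _ = Real.log ρ * mpDensity Nb x + Real.log (1 + c * x) * mpDensity Nb x := by ring
lemma hasDeriv_sqrtpart {A B x : ℝ} (hAB : A < B) (hx : x ∈ Set.Ioo A B) :
    HasDerivAt (fun y => Real.sqrt ((y - A) * (B - y)))
      ((A + B - 2 * x) / (2 * Real.sqrt ((x - A) * (B - x)))) x := by
  have hp : 0 < (x - A) * (B - x) := by
    have := hx.1; have := hx.2; nlinarith
  have hp' : HasDerivAt (fun y => (y - A) * (B - y)) (A + B - 2 * x) x := by
    have h := ((hasDerivAt_id x).sub_const A).mul ((hasDerivAt_const x B).sub (hasDerivAt_id x))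
    have h2 : A + B - 2 * x = 1 * (B - id x) + (id x - A) * (0 - 1) := by simp; ring
    rw [h2]; exact h
  have h2 := (Real.hasDerivAt_sqrt hp.ne').comp x hp'
  refine h2.congr_deriv (Eq.symm ?_)
  field_simp

lemma hasDeriv_arcsin1 {A B x : ℝ} (hAB : A < B) (hx : x ∈ Set.Ioo A B) :
    HasDerivAt (fun y => (A + B) / 2 * Real.arcsin ((2 * y - (A + B)) / (B - A)))
      ((A + B) / (2 * Real.sqrt ((x - A) * (B - x)))) x := by
  have hp : 0 < (x - A) * (B - x) := by
    have := hx.1; have := hx.2; nlinarith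
  have hBA : 0 < B - A := by linarith
  set R := Real.sqrt ((x - A) * (B - x)) with hR
  have hR0 : 0 < R := Real.sqrt_pos.mpr hp
  have hR2 : R ^ 2 = (x - A) * (B - x) := Real.sq_sqrt hp.le
  set u := (2 * x - (A + B)) / (B - A) with hu
  have hu1 : u < 1 := by
    rw [hu, div_lt_one hBA]; linarith [hx.2]
  have hum1 : -1 < u := by
    rw [hu, lt_div_iff₀ hBA]; nlinarith [hx.1]
  have hdu : HasDerivAt (fun y => (2 * y - (A + B)) / (B - A)) (2 / (B - A)) x := by
    have h := (((hasDerivAt_id x).const_mul 2).sub_const (A + B)).div_const (B - A)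
    refine h.congr_deriv (Eq.symm ?_)
    norm_num
  have harc := (Real.hasDerivAt_arcsin hum1.ne' hu1.ne).comp x hdu
  have hsq : Real.sqrt (1 - u ^ 2) = 2 * R / (B - A) := by
    rw [show 1 - u ^ 2 = (2 * R / (B - A)) ^ 2 by
      rw [hu]
      field_simp
      linear_combination (-4:ℝ) * hR2]
    exact Real.sqrt_sq (by positivity)
  have h := harc.const_mul ((A + B) / 2)
  refine h.congr_deriv (Eq.symm ?_)
  rw [hsq]
  field_simp

lemma hasDeriv_arcsin2 {A B x : ℝ} (hA : 0 ≤ A) (hAB : A < B) (hB0 : 0 < B)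
    (hx : x ∈ Set.Ioo A B) :
    HasDerivAt (fun y => Real.sqrt (A * B)
        * Real.arcsin (((A + B) * y - 2 * (A * B)) / ((B - A) * y)))
      (A * B / (x * Real.sqrt ((x - A) * (B - x)))) x := by
  have hp : 0 < (x - A) * (B - x) := by
    have := hx.1; have := hx.2; nlinarith
  have hBA : 0 < B - A := by linarith
  have hx0 : 0 < x := lt_of_le_of_lt hA hx.1
  set R := Real.sqrt ((x - A) * (B - x)) with hR
  have hR0 : 0 < R := Real.sqrt_pos.mpr hp
  have hR2 : R ^ 2 = (x - A) * (B - x) := Real.sq_sqrt hp.le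
  rcases hA.eq_or_lt with ha | ha
  · -- A = 0
    have hfun : (fun y => Real.sqrt (A * B)
        * Real.arcsin (((A + B) * y - 2 * (A * B)) / ((B - A) * y))) = fun _ => (0:ℝ) := by
      funext y
      rw [← ha, zero_mul, Real.sqrt_zero, zero_mul]
    rw [hfun, show A * B / (x * R) = 0 by rw [← ha]; simp]
    exact hasDerivAt_const x 0
  · -- A > 0
    have hAB0 : 0 < A * B := by positivity
    have hden : (B - A) * x ≠ 0 := by positivity
    have hdnum : HasDerivAt (fun y => (A + B) * y - 2 * (A * B)) (A + B) x := by
      have h := ((hasDerivAt_id x).const_mul (A + B)).sub_const (2 * (A * B))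
      simpa using h
    have hdden : HasDerivAt (fun y => (B - A) * y) (B - A) x := by
      have h := (hasDerivAt_id x).const_mul (B - A)
      simpa using h
    have hv := hdnum.div hdden hden
    set v := ((A + B) * x - 2 * (A * B)) / ((B - A) * x) with hvdef
    have hv1 : v < 1 := by
      rw [hvdef, div_lt_one (by positivity)]
      nlinarith [hx.2]
    have hvm1 : -1 < v := by
      rw [hvdef, lt_div_iff₀ (by positivity)]
      nlinarith [hx.1]
    have harc := (Real.hasDerivAt_arcsin hvm1.ne' hv1.ne).comp x hv
    have hsq : Real.sqrt (1 - v ^ 2) = 2 * Real.sqrt (A * B) * R / ((B - A) * x) := by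
      rw [show 1 - v ^ 2 = (2 * Real.sqrt (A * B) * R / ((B - A) * x)) ^ 2 by
        rw [hvdef]
        have hsA : Real.sqrt A ^ 2 = A := Real.sq_sqrt hA
        have hsB : Real.sqrt B ^ 2 = B := Real.sq_sqrt hB0.le
        have hsAB : Real.sqrt (A * B) ^ 2 = A * B := Real.sq_sqrt hAB0.le
        field_simp
        linear_combination (-4*A*B)*hR2 + (-4*R^2*(Real.sqrt B)^2)*hsA + (-4*R^2*A)*hsB + (4*R^2*(Real.sqrt A)^2)*hsB + (4*R^2*B)*hsA + (-4*R^2)*hsAB]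
      exact Real.sqrt_sq (by positivity)
    have h := harc.const_mul (Real.sqrt (A * B))
    refine h.congr_deriv (Eq.symm ?_)
    rw [hsq]
    have hs0 : (0:ℝ) < Real.sqrt (A * B) := Real.sqrt_pos.mpr hAB0
    field_simp
    ring

lemma hasDeriv_F {A B x : ℝ} (hA : 0 ≤ A) (hAB : A < B) (hB0 : 0 < B)
    (hx : x ∈ Set.Ioo A B) :
    HasDerivAt (fun y => Real.sqrt ((y - A) * (B - y))
        + (A + B) / 2 * Real.arcsin ((2 * y - (A + B)) / (B - A))
        - Real.sqrt (A * B) * Real.arcsin (((A + B) * y - 2 * (A * B)) / ((B - A) * y)))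
      (Real.sqrt ((x - A) * (B - x)) / x) x := by
  have hp : 0 < (x - A) * (B - x) := by
    have := hx.1; have := hx.2; nlinarith
  have hx0 : 0 < x := lt_of_le_of_lt hA hx.1
  set R := Real.sqrt ((x - A) * (B - x)) with hR
  have hR0 : 0 < R := Real.sqrt_pos.mpr hp
  have hR2 : R ^ 2 = (x - A) * (B - x) := Real.sq_sqrt hp.le
  have h := ((hasDeriv_sqrtpart hAB hx).add (hasDeriv_arcsin1 hAB hx)).sub
    (hasDeriv_arcsin2 hA hAB hB0 hx)
  refine h.congr_deriv (Eq.symm ?_)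
  rw [← hR]
  field_simp
  linear_combination 2 * hR2

lemma continuousOn_F {A B : ℝ} (hA : 0 ≤ A) (hAB : A < B) (hB0 : 0 < B) :
    ContinuousOn (fun y => Real.sqrt ((y - A) * (B - y))
        + (A + B) / 2 * Real.arcsin ((2 * y - (A + B)) / (B - A))
        - Real.sqrt (A * B) * Real.arcsin (((A + B) * y - 2 * (A * B)) / ((B - A) * y)))
      (Set.Icc A B) := by
  have h1 : Continuous (fun y : ℝ => Real.sqrt ((y - A) * (B - y))) :=
    Real.continuous_sqrt.comp (by continuity)
  have h2 : Continuous (fun y : ℝ => (A + B) / 2 * Real.arcsin ((2 * y - (A + B)) / (B - A))) :=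
    continuous_const.mul (Real.continuous_arcsin.comp (by continuity))
  refine ((h1.continuousOn.add h2.continuousOn)).sub ?_
  rcases hA.eq_or_lt with ha | ha
  · have hfun : (fun y : ℝ => Real.sqrt (A * B)
        * Real.arcsin (((A + B) * y - 2 * (A * B)) / ((B - A) * y))) = fun _ => (0:ℝ) := by
      funext y; rw [← ha, zero_mul, Real.sqrt_zero, zero_mul]
    rw [hfun]
    exact continuousOn_const
  · refine continuousOn_const.mul (Real.continuous_arcsin.comp_continuousOn ?_)
    apply ContinuousOn.div (by fun_prop) (by fun_prop)
    intro y hy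
    have hy0 : 0 < y := lt_of_lt_of_le ha hy.1
    have : 0 < B - A := by linarith
    positivity

lemma integral_sqrt_div {A B : ℝ} (hA : 0 ≤ A) (hAB : A < B) :
    ∫ x in Set.Ioc A B, Real.sqrt ((x - A) * (B - x)) / x
      = (A + B) * (Real.pi / 2) - Real.sqrt (A * B) * Real.pi := by
  have hB0 : 0 < B := lt_of_le_of_lt hA hAB
  set f := fun x : ℝ => Real.sqrt ((x - A) * (B - x)) / x with hf
  have hmeas : Measurable f := by
    apply Measurable.div _ measurable_id
    exact Real.continuous_sqrt.measurable.comp (by fun_prop)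
  have hbound : ∀ x ∈ Set.Ioc A B, |f x| ≤ Real.sqrt B * B ^ ((1:ℝ)/4) * x ^ (-(3/4) : ℝ) := by
    intro x hx
    have hx0 : 0 < x := lt_of_le_of_lt hA hx.1
    have h1 : Real.sqrt ((x - A) * (B - x)) ≤ Real.sqrt x * Real.sqrt B := by
      rw [← Real.sqrt_mul hx0.le]
      apply Real.sqrt_le_sqrt
      have h2 : x - A ≤ x := sub_le_self _ hA
      exact mul_le_mul h2 (by linarith [hx.2]) (by linarith [hx.2]) hx0.le
    have h3 : Real.sqrt x / x = x ^ (-(1/2) : ℝ) := by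
      rw [Real.sqrt_eq_rpow, div_eq_mul_inv, ← Real.rpow_neg_one x, ← Real.rpow_add hx0]
      norm_num
    have h4 : |f x| = f x := abs_of_nonneg (div_nonneg (Real.sqrt_nonneg _) hx0.le)
    rw [h4, hf]
    calc Real.sqrt ((x - A) * (B - x)) / x ≤ Real.sqrt x * Real.sqrt B / x := by
          apply div_le_div_of_nonneg_right h1 hx0.le |>.trans_eq rfl
      _ = Real.sqrt B * (Real.sqrt x / x) := by ring
      _ = Real.sqrt B * x ^ (-(1/2) : ℝ) := by rw [h3]
      _ ≤ Real.sqrt B * (B ^ ((1:ℝ)/4) * x ^ (-(3/4) : ℝ)) := by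
          exact mul_le_mul_of_nonneg_left (rpow_half_le hx0 hx.2) (Real.sqrt_nonneg _)
      _ = Real.sqrt B * B ^ ((1:ℝ)/4) * x ^ (-(3/4) : ℝ) := by ring
  have hintOn : IntegrableOn f (Set.Ioc A B) :=
    mp_integrableOn_of_bound hA hB0 hmeas.aestronglyMeasurable.restrict hbound
  have hii : IntervalIntegrable f volume A B :=
    (intervalIntegrable_iff_integrableOn_Ioc_of_le hAB.le).mpr hintOn
  have h1 : ∫ x in Set.Ioc A B, f x = ∫ x in A..B, f x :=
    (intervalIntegral.integral_of_le hAB.le).symm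
  rw [h1, intervalIntegral.integral_eq_sub_of_hasDeriv_right_of_le hAB.le
    (continuousOn_F hA hAB hB0)
    (fun x hx => (hasDeriv_F hA hAB hB0 hx).hasDerivWithinAt) hii]
  have e1 : Real.sqrt ((B - A) * (B - B)) = 0 := by simp
  have e2 : Real.sqrt ((A - A) * (B - A)) = 0 := by simp
  have e3 : (2 * B - (A + B)) / (B - A) = 1 := by
    rw [show 2 * B - (A + B) = B - A by ring, div_self (by linarith : B - A ≠ 0)]
  have e4 : (2 * A - (A + B)) / (B - A) = -1 := by
    rw [show 2 * A - (A + B) = -(B - A) by ring, neg_div, div_self (by linarith : B - A ≠ 0)]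
  have e5 : ((A + B) * B - 2 * (A * B)) / ((B - A) * B) = 1 := by
    rw [show (A + B) * B - 2 * (A * B) = (B - A) * B by ring,
      div_self (mul_ne_zero (sub_ne_zero.mpr hAB.ne') hB0.ne')]
  have e6 : Real.sqrt (A * B) * Real.arcsin (((A + B) * A - 2 * (A * B)) / ((B - A) * A))
      = Real.sqrt (A * B) * (-(Real.pi / 2)) := by
    rcases hA.eq_or_lt with ha | ha
    · rw [← ha]; simp
    · rw [show (A + B) * A - 2 * (A * B) = -((B - A) * A) by ring, neg_div,
        div_self (mul_ne_zero (sub_ne_zero.mpr hAB.ne') ha.ne')]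
      simp [Real.arcsin_neg, Real.arcsin_one]
  rw [e1, e2, e3, e4, e5, e6, Real.arcsin_one, Real.arcsin_neg, Real.arcsin_one]
  ring

lemma mp_total {Nb : ℝ} (hNb0 : 0 < Nb) (hNb1 : Nb ≤ 1) :
    ∫ x in Set.Ioc ((1 - Real.sqrt Nb) ^ 2) ((1 + Real.sqrt Nb) ^ 2), mpDensity Nb x = 1 := by
  set s := Real.sqrt Nb with hs
  have hs0 : 0 < s := Real.sqrt_pos.mpr hNb0
  have hs1 : s ≤ 1 := by
    rw [hs, show (1:ℝ) = Real.sqrt 1 by simp]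
    exact Real.sqrt_le_sqrt hNb1
  have hs2 : s ^ 2 = Nb := Real.sq_sqrt hNb0.le
  set A := (1 - s) ^ 2 with hA
  set B := (1 + s) ^ 2 with hB
  have hA0 : 0 ≤ A := sq_nonneg _
  have hAB : A < B := by rw [hA, hB]; nlinarith
  have key := integral_sqrt_div hA0 hAB
  have hptw : ∀ x : ℝ, mpDensity Nb x = (Real.sqrt ((x - A) * (B - x)) / x) * (2 * Real.pi * Nb)⁻¹ := by
    intro x
    unfold mpDensity
    rw [← hs, ← hA, ← hB, ← div_eq_mul_inv, div_div]
    congr 1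
    ring
  simp only [hptw]
  rw [MeasureTheory.integral_mul_const, key]
  have hab : A * B = (1 - Nb) ^ 2 := by rw [hA, hB, ← hs2]; ring
  have hsab : Real.sqrt (A * B) = 1 - Nb := by
    rw [hab, Real.sqrt_sq (by linarith : (0:ℝ) ≤ 1 - Nb)]
  have hapb : A + B = 2 + 2 * Nb := by rw [hA, hB, ← hs2]; ring
  rw [hsab, hapb]
  have hpi := Real.pi_ne_zero
  field_simp
  ring

/-- Let `0 < N̄ ≤ 1`, `K̄ > 0`, and let `η ∈ [a, b)` satisfy
`∫_η^b g(λ) dλ = min{1, K̄/N̄}`.  Then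
`lim_{ρ→∞} (∫_η^b log(1 + (ρ/K̄)λ) g(λ) dλ)/(∫_a^b log(1 + ρλ) g(λ) dλ) = min{1, K̄/N̄}`. -/
theorem stmt_16 (Nb Kb : ℝ) (hNb0 : 0 < Nb) (hNb1 : Nb ≤ 1) (hKb : 0 < Kb)
    (η : ℝ) (hη : η ∈ Set.Ico ((1 - Real.sqrt Nb) ^ 2) ((1 + Real.sqrt Nb) ^ 2))
    (hint : (∫ lam in Set.Icc η ((1 + Real.sqrt Nb) ^ 2), mpDensity Nb lam)
      = min 1 (Kb / Nb)) :
    Filter.Tendsto (fun ρ : ℝ =>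
        (∫ lam in Set.Icc η ((1 + Real.sqrt Nb) ^ 2),
            Real.log (1 + (ρ / Kb) * lam) * mpDensity Nb lam) /
        (∫ lam in Set.Icc ((1 - Real.sqrt Nb) ^ 2) ((1 + Real.sqrt Nb) ^ 2),
            Real.log (1 + ρ * lam) * mpDensity Nb lam))
      Filter.atTop (nhds (min 1 (Kb / Nb))) := by
  have hM : (∫ x in Set.Ioc η ((1 + Real.sqrt Nb) ^ 2), mpDensity Nb x) = min 1 (Kb / Nb) := by
    rw [← MeasureTheory.integral_Icc_eq_integral_Ioc]; exact hint
  have hNum := key_tendsto (c := 1 / Kb) hNb0 (by positivity) hη.1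
  have hDen := key_tendsto (c := 1) hNb0 one_pos
    (le_refl ((1 - Real.sqrt Nb) ^ 2))
  rw [hM] at hNum
  rw [mp_total hNb0 hNb1] at hDen
  have combined := hNum.div hDen (by norm_num : (1:ℝ) ≠ 0)
  rw [div_one] at combined
  apply combined.congr'
  filter_upwards [eventually_ge_atTop (2:ℝ)] with ρ hρ
  have hlρ : Real.log ρ ≠ 0 := (Real.log_pos (by linarith)).ne'
  simp only [Pi.div_apply]
  rw [div_div_div_cancel_right₀ hlρ]
  congr 1
  · rw [MeasureTheory.integral_Icc_eq_integral_Ioc]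
    congr 1
    funext x
    congr 2
    ring
  · rw [MeasureTheory.integral_Icc_eq_integral_Ioc]
    congr 1
    funext x
    congr 2
    ring
end

section
/- Let 0 < N̄ ≤ 1 and K̄ > 0, set a = (1 − √N̄)² and b = (1 + √N̄)², let g(λ) = √((λ − a)(b − λ))/(2π λ N̄) on [a, b] be the Marchenko–Pastur density, and let η ∈ [a, b) satisfy ∫_η^b g(λ) dλ = min{1, K̄/N̄}. Then lim_{ρ → 0+} ( ∫_η^b log(1 + (ρ/K̄) λ) g(λ) dλ ) / ( ∫_a^b log(1 + ρ λ) g(λ) dλ ) = (1/K̄) ∫_η^b λ g(λ) dλ, and this limit is at most (1 + 1/√N̄)². -/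
open MeasureTheory ProbabilityTheory Filter Real
open scoped ENNReal NNReal Topology
lemma mp_lam_mul {Nb : ℝ} (hNb0 : 0 < Nb) (lam : ℝ) :
    lam * mpDensity Nb lam =
      Real.sqrt ((lam - (1 - Real.sqrt Nb) ^ 2) * ((1 + Real.sqrt Nb) ^ 2 - lam)) /
        (2 * Real.pi * Nb) := by
  unfold mpDensity
  rcases eq_or_ne lam 0 with h | h
  · subst h
    have h1 : ((0:ℝ) - (1 - Real.sqrt Nb) ^ 2) * ((1 + Real.sqrt Nb) ^ 2 - 0) ≤ 0 :=
      mul_nonpos_of_nonpos_of_nonneg (by nlinarith [sq_nonneg (1 - Real.sqrt Nb)])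
        (by nlinarith [sq_nonneg (1 + Real.sqrt Nb)])
    rw [zero_mul, Real.sqrt_eq_zero'.mpr (by linarith), zero_div]
  · have hπ : Real.pi ≠ 0 := Real.pi_ne_zero
    field_simp

lemma mp_nonneg_s17 {Nb : ℝ} (hNb0 : 0 < Nb) {lam : ℝ} (h : 0 ≤ lam) :
    0 ≤ mpDensity Nb lam :=
  div_nonneg (Real.sqrt_nonneg _) (by positivity)

lemma mp_meas {Nb : ℝ} : Measurable (mpDensity Nb) := by
  unfold mpDensity; fun_prop

lemma integrable_lam_mul {Nb : ℝ} (hNb0 : 0 < Nb) (α β : ℝ) :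
    IntegrableOn (fun lam => lam * mpDensity Nb lam) (Set.Icc α β) := by
  simp only [mp_lam_mul hNb0]
  apply Continuous.integrableOn_Icc
  fun_prop

lemma mp_mean {Nb : ℝ} (hNb0 : 0 < Nb) :
    ∫ lam in Set.Icc ((1 - Real.sqrt Nb) ^ 2) ((1 + Real.sqrt Nb) ^ 2),
      lam * mpDensity Nb lam = 1 := by
  set s := Real.sqrt Nb with hsdef
  have hs : 0 < s := Real.sqrt_pos.mpr hNb0
  have hs2 : s ^ 2 = Nb := Real.sq_sqrt hNb0.le
  have hab : (1 - s) ^ 2 ≤ (1 + s) ^ 2 := by nlinarith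
  have hπ : Real.pi ≠ 0 := Real.pi_ne_zero
  simp only [mp_lam_mul hNb0, ← hsdef]
  rw [integral_Icc_eq_integral_Ioc, ← intervalIntegral.integral_of_le hab,
    intervalIntegral.integral_div]
  have h2s : (2 * s) ≠ 0 := by positivity
  have key := intervalIntegral.integral_comp_mul_add
    (a := (-1:ℝ)) (b := 1)
    (f := fun x => Real.sqrt ((x - (1 - s) ^ 2) * ((1 + s) ^ 2 - x))) h2s (1 + s ^ 2)
  have e1 : (2 * s) * (-1) + (1 + s ^ 2) = (1 - s) ^ 2 := by ring
  have e2 : (2 * s) * 1 + (1 + s ^ 2) = (1 + s) ^ 2 := by ring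
  rw [e1, e2] at key
  have e3 : ∀ x : ℝ,
      Real.sqrt ((2 * s * x + (1 + s ^ 2) - (1 - s) ^ 2) *
        ((1 + s) ^ 2 - (2 * s * x + (1 + s ^ 2)))) = 2 * s * Real.sqrt (1 - x ^ 2) := by
    intro x
    have h4 : (2 * s * x + (1 + s ^ 2) - (1 - s) ^ 2) *
        ((1 + s) ^ 2 - (2 * s * x + (1 + s ^ 2))) = (2 * s) ^ 2 * (1 - x ^ 2) := by ring
    rw [h4, Real.sqrt_mul (by positivity), Real.sqrt_sq (by positivity)]
  simp only [e3] at key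
  rw [intervalIntegral.integral_const_mul, integral_sqrt_one_sub_sq] at key
  rw [smul_eq_mul] at key
  have keyI : (∫ x in ((1 - s) ^ 2)..((1 + s) ^ 2),
      Real.sqrt ((x - (1 - s) ^ 2) * ((1 + s) ^ 2 - x))) = 2 * Real.pi * Nb := by
    have h := congrArg (fun t => (2 * s) * t) key
    simp only [← mul_assoc] at h
    rw [mul_inv_cancel₀ h2s, one_mul] at h
    rw [← h, ← hs2]; ring
  rw [keyI]
  field_simp

lemma mp_tendsto {Nb : ℝ} (hNb0 : 0 < Nb) {c α β : ℝ} (hc : 0 < c) (hα : 0 ≤ α) :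
    Tendsto (fun ρ : ℝ =>
        (∫ lam in Set.Icc α β, Real.log (1 + c * ρ * lam) * mpDensity Nb lam) / ρ)
      (𝓝[>] (0:ℝ))
      (𝓝 (c * ∫ lam in Set.Icc α β, lam * mpDensity Nb lam)) := by
  have hmean_int : IntegrableOn (fun lam => lam * mpDensity Nb lam) (Set.Icc α β) :=
    integrable_lam_mul hNb0 α β
  have hDCT := tendsto_integral_filter_of_dominated_convergence
    (μ := volume.restrict (Set.Icc α β)) (l := 𝓝[>] (0:ℝ))
    (F := fun ρ lam => Real.log (1 + c * ρ * lam) * mpDensity Nb lam / ρ)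
    (f := fun lam => c * (lam * mpDensity Nb lam))
    (bound := fun lam => c * (lam * mpDensity Nb lam))
    ?_ ?_ ?_ ?_
  · simp only [MeasureTheory.integral_div] at hDCT
    rwa [MeasureTheory.integral_const_mul] at hDCT
  · refine Eventually.of_forall fun ρ => Measurable.aestronglyMeasurable ?_
    exact ((Real.measurable_log.comp (by fun_prop)).mul mp_meas).div_const ρ
  · filter_upwards [self_mem_nhdsWithin] with ρ hρ
    have hρ0 : (0:ℝ) < ρ := hρ
    filter_upwards [ae_restrict_mem measurableSet_Icc] with lam hlam
    have hlam0 : 0 ≤ lam := le_trans hα hlam.1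
    have hg : 0 ≤ mpDensity Nb lam := mp_nonneg_s17 hNb0 hlam0
    have hx : 0 ≤ c * ρ * lam := by positivity
    have hlog0 : 0 ≤ Real.log (1 + c * ρ * lam) := Real.log_nonneg (by linarith)
    have hlog1 : Real.log (1 + c * ρ * lam) ≤ c * ρ * lam := by
      have := Real.log_le_sub_one_of_pos (show (0:ℝ) < 1 + c * ρ * lam by linarith)
      linarith
    rw [Real.norm_eq_abs, abs_of_nonneg (div_nonneg (mul_nonneg hlog0 hg) hρ0.le)]
    calc Real.log (1 + c * ρ * lam) * mpDensity Nb lam / ρ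
        ≤ (c * ρ * lam) * mpDensity Nb lam / ρ := by gcongr
      _ = c * (lam * mpDensity Nb lam) := by field_simp
  · exact hmean_int.const_mul c
  · refine Eventually.of_forall fun lam => ?_
    have h1 : HasDerivAt (fun ρ : ℝ => 1 + c * ρ * lam) (c * lam) 0 := by
      simpa using (((hasDerivAt_id (0:ℝ)).const_mul c).mul_const lam).const_add 1
    have h2 : HasDerivAt Real.log 1 ((fun ρ : ℝ => 1 + c * ρ * lam) 0) := by
      simpa using Real.hasDerivAt_log one_ne_zero
    have hd : HasDerivAt (fun ρ : ℝ => Real.log (1 + c * ρ * lam)) (c * lam) 0 := by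
      have h3 := h2.comp 0 h1; rw [one_mul] at h3; exact h3
    rw [hasDerivAt_iff_tendsto_slope] at hd
    have hmono : 𝓝[>] (0:ℝ) ≤ 𝓝[≠] (0:ℝ) :=
      nhdsWithin_mono _ fun x hx => ne_of_gt hx
    have h3 : Tendsto (fun ρ => Real.log (1 + c * ρ * lam) / ρ) (𝓝[>] (0:ℝ))
        (𝓝 (c * lam)) := by
      refine Tendsto.congr' ?_ (hd.mono_left hmono)
      filter_upwards [self_mem_nhdsWithin] with ρ hρ
      simp [slope_def_field]
    have heq : (fun ρ : ℝ => Real.log (1 + c * ρ * lam) * mpDensity Nb lam / ρ)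
        = fun ρ : ℝ => Real.log (1 + c * ρ * lam) / ρ * mpDensity Nb lam := by
      funext ρ; rw [mul_div_right_comm]
    rw [heq]
    simpa [mul_assoc] using h3.mul_const (mpDensity Nb lam)

/-- Let `0 < N̄ ≤ 1`, `K̄ > 0`, and let `η ∈ [a, b)` satisfy
`∫_η^b g(λ) dλ = min{1, K̄/N̄}`.  Then
`lim_{ρ→0⁺} (∫_η^b log(1 + (ρ/K̄)λ) g(λ) dλ)/(∫_a^b log(1 + ρλ) g(λ) dλ)
  = (1/K̄) ∫_η^b λ g(λ) dλ`, and this limit is at most `(1 + 1/√N̄)²`. -/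
theorem stmt_17 (Nb Kb : ℝ) (hNb0 : 0 < Nb) (hNb1 : Nb ≤ 1) (hKb : 0 < Kb)
    (η : ℝ) (hη : η ∈ Set.Ico ((1 - Real.sqrt Nb) ^ 2) ((1 + Real.sqrt Nb) ^ 2))
    (hint : (∫ lam in Set.Icc η ((1 + Real.sqrt Nb) ^ 2), mpDensity Nb lam)
      = min 1 (Kb / Nb)) :
    Filter.Tendsto (fun ρ : ℝ =>
        (∫ lam in Set.Icc η ((1 + Real.sqrt Nb) ^ 2),
            Real.log (1 + (ρ / Kb) * lam) * mpDensity Nb lam) /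
        (∫ lam in Set.Icc ((1 - Real.sqrt Nb) ^ 2) ((1 + Real.sqrt Nb) ^ 2),
            Real.log (1 + ρ * lam) * mpDensity Nb lam))
      (nhdsWithin 0 (Set.Ioi 0))
      (nhds ((1 / Kb) *
        ∫ lam in Set.Icc η ((1 + Real.sqrt Nb) ^ 2), lam * mpDensity Nb lam)) ∧
    (1 / Kb) * (∫ lam in Set.Icc η ((1 + Real.sqrt Nb) ^ 2), lam * mpDensity Nb lam)
      ≤ (1 + 1 / Real.sqrt Nb) ^ 2 := by
  have hs : 0 < Real.sqrt Nb := Real.sqrt_pos.mpr hNb0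
  have hs2 : Real.sqrt Nb ^ 2 = Nb := Real.sq_sqrt hNb0.le
  set b := (1 + Real.sqrt Nb) ^ 2 with hbdef
  have hη0 : 0 ≤ η := le_trans (by positivity) hη.1
  -- integrability of the density on [η, b]
  have hgint : IntegrableOn (mpDensity Nb) (Set.Icc η b) := by
    by_contra h
    rw [integral_undef h] at hint
    have hpos : (0:ℝ) < min 1 (Kb / Nb) := lt_min one_pos (div_pos hKb hNb0)
    linarith [hint ▸ hpos]
  -- the bound
  have hbd : (1 / Kb) * (∫ lam in Set.Icc η b, lam * mpDensity Nb lam)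
      ≤ (1 + 1 / Real.sqrt Nb) ^ 2 := by
    have h1 : ∫ lam in Set.Icc η b, lam * mpDensity Nb lam ≤ b * (Kb / Nb) := by
      calc ∫ lam in Set.Icc η b, lam * mpDensity Nb lam
          ≤ ∫ lam in Set.Icc η b, b * mpDensity Nb lam := by
            refine setIntegral_mono_on (integrable_lam_mul hNb0 η b)
              (hgint.const_mul b) measurableSet_Icc fun lam hlam => ?_
            exact mul_le_mul_of_nonneg_right hlam.2
              (mp_nonneg_s17 hNb0 (le_trans hη0 hlam.1))
        _ = b * min 1 (Kb / Nb) := by rw [MeasureTheory.integral_const_mul, hint]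
        _ ≤ b * (Kb / Nb) :=
            mul_le_mul_of_nonneg_left (min_le_right _ _) (by positivity)
    have h2 : (1 + 1 / Real.sqrt Nb) ^ 2 = b / Nb := by
      rw [hbdef, ← hs2]; field_simp; rw [Real.sqrt_sq hs.le]; ring
    rw [h2]
    calc (1 / Kb) * (∫ lam in Set.Icc η b, lam * mpDensity Nb lam)
        ≤ (1 / Kb) * (b * (Kb / Nb)) :=
          mul_le_mul_of_nonneg_left h1 (by positivity)
      _ = b / Nb := by field_simp
  refine ⟨?_, hbd⟩
  -- numerator limit
  have hnum : Tendsto (fun ρ : ℝ =>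
      (∫ lam in Set.Icc η b, Real.log (1 + (ρ / Kb) * lam) * mpDensity Nb lam) / ρ)
      (𝓝[>] (0:ℝ))
      (𝓝 ((1 / Kb) * ∫ lam in Set.Icc η b, lam * mpDensity Nb lam)) := by
    have := mp_tendsto hNb0 (c := 1 / Kb) (α := η) (β := b) (by positivity) hη0
    simpa only [show ∀ ρ lam : ℝ, (1:ℝ) + 1 / Kb * ρ * lam = 1 + (ρ / Kb) * lam from
      fun ρ lam => by ring] using this
  -- denominator limit
  have hden : Tendsto (fun ρ : ℝ =>
      (∫ lam in Set.Icc ((1 - Real.sqrt Nb) ^ 2) b,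
        Real.log (1 + ρ * lam) * mpDensity Nb lam) / ρ)
      (𝓝[>] (0:ℝ)) (𝓝 1) := by
    have := mp_tendsto hNb0 (c := 1) (α := (1 - Real.sqrt Nb) ^ 2) (β := b)
      one_pos (by positivity)
    simp only [one_mul] at this
    rwa [mp_mean hNb0] at this
  have hdiv := hnum.div hden one_ne_zero
  rw [div_one] at hdiv
  refine Tendsto.congr' ?_ hdiv
  filter_upwards [self_mem_nhdsWithin] with ρ hρ
  have hρ0 : (ρ:ℝ) ≠ 0 := ne_of_gt hρ
  simp only [Pi.div_apply]
  rw [div_div_div_comm, div_self hρ0, div_one]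
end
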